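/- arXiv:2403.05947 — 6 statements merged into one kernel-verified Lean document; each statement's English description precedes it below -/
import Mathlib

section
/- Let a, b > 0 with b ≤ a, let 0 ≤ x < b/2 and y ≥ 0, and set R = [−a/2, a/2] × [−b/2, b/2] and R̃ = [−a/2 + x, a/2 − x] × [−b/2 − y, b/2 + y]. Then ∫_{R̃ △ R} d_∞(z, ∂R) dz = y²(a − 2x) + (4/3)x³ + x²(b − 2x). -/
/-! The symmetric difference splits into the horizontal strips `|u| ≤ a/2 - x`,
`b/2 < |v| ≤ b/2 + y` and the vertical strips `a/2 - x < |u| ≤ a/2`, `|v| ≤ b/2`. On the former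
the sup-distance to `∂R` is `|v| - b/2`, on the latter it is `min (a/2 - |u|) (b/2 - |v|)`.
Both are even in each coordinate, so Fubini reduces the two integrals to elementary integrals
over half-lines, giving `(a - 2x) y²` and `b x² - (2/3) x³`. -/

open MeasureTheory Set

/-- `d_∞(z, ∂F)`: sup-norm distance from `z` to the topological boundary of `F`
(the product distance on `ℝ × ℝ` is the sup distance). -/
noncomputable def dinfty (z : ℝ × ℝ) (F : Set (ℝ × ℝ)) : ℝ :=
  Metric.infDist z (frontier F)

/-- The rectangle `[-a/2, a/2] × [-b/2, b/2]`. -/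
def rect (a b : ℝ) : Set (ℝ × ℝ) :=
  Set.Icc (-(a / 2)) (a / 2) ×ˢ Set.Icc (-(b / 2)) (b / 2)

namespace Metric

variable {α β : Type*} [PseudoMetricSpace α] [PseudoMetricSpace β]

theorem infDist_union {s t : Set α} (hs : s.Nonempty) (ht : t.Nonempty) (x : α) :
    infDist x (s ∪ t) = min (infDist x s) (infDist x t) := by
  simp only [infDist, infEDist_union,
    ENNReal.toReal_min (infEDist_ne_top hs) (infEDist_ne_top ht)]

theorem infDist_prod {s : Set α} {t : Set β} (hs : s.Nonempty) (ht : t.Nonempty) (x : α × β) :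
    infDist x (s ×ˢ t) = max (infDist x.1 s) (infDist x.2 t) := by
  simp only [infDist, infEDist_prod,
    ENNReal.toReal_max (infEDist_ne_top hs) (infEDist_ne_top ht)]

end Metric

namespace Real

open Metric

theorem infDist_Icc_neg {c : ℝ} (hc : 0 ≤ c) (u : ℝ) :
    infDist u (Icc (-c) c) = max 0 (|u| - c) := by
  refine le_antisymm ?_ ((le_infDist (nonempty_Icc.2 (by linarith))).2 fun w hw => ?_)
  · calc infDist u (Icc (-c) c) ≤ dist u (max (-c) (min u c)) :=
          infDist_le_dist_of_mem ⟨le_max_left _ _, max_le (neg_le_self hc) (min_le_right _ _)⟩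
      _ = max 0 (|u| - c) := by
          rw [Real.dist_eq]
          grind [abs_of_nonneg, abs_of_nonpos]
  · rw [Real.dist_eq]
    exact max_le (abs_nonneg _)
      ((sub_le_sub_left (abs_le.2 hw) _).trans (abs_sub_abs_le_abs_sub u w))

theorem infDist_pair_neg {c : ℝ} (hc : 0 ≤ c) (u : ℝ) : infDist u {-c, c} = |(|u| - c)| := by
  rw [insert_eq, infDist_union (singleton_nonempty _) (singleton_nonempty _), infDist_singleton,
    infDist_singleton, Real.dist_eq, Real.dist_eq]
  grind [abs_of_nonneg, abs_of_nonpos]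

end Real

open Metric

theorem dinfty_rect {a b : ℝ} (ha : 0 ≤ a) (hb : 0 ≤ b) (u v : ℝ) :
    dinfty (u, v) (rect a b) =
      min (max (max 0 (|u| - a / 2)) |(|v| - b / 2)|)
        (max |(|u| - a / 2)| (max 0 (|v| - b / 2))) := by
  have hIa : (Icc (-(a / 2)) (a / 2)).Nonempty := nonempty_Icc.2 (by linarith)
  have hIb : (Icc (-(b / 2)) (b / 2)).Nonempty := nonempty_Icc.2 (by linarith)
  rw [dinfty, rect, frontier_prod_eq, closure_Icc, closure_Icc, frontier_Icc (by linarith),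
    frontier_Icc (by linarith),
    infDist_union (hIa.prod (insert_nonempty _ _)) ((insert_nonempty _ _).prod hIb),
    infDist_prod hIa (insert_nonempty _ _), infDist_prod (insert_nonempty _ _) hIb,
    Real.infDist_Icc_neg (by linarith), Real.infDist_Icc_neg (by linarith),
    Real.infDist_pair_neg (by linarith), Real.infDist_pair_neg (by linarith)]

theorem dinfty_rect_of_mem {a b : ℝ} {z : ℝ × ℝ} (hz : z ∈ rect a b) :
    dinfty z (rect a b) = min (a / 2 - |z.1|) (b / 2 - |z.2|) := by
  obtain ⟨hu, hv⟩ := hz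
  rw [dinfty_rect (by linarith [hu.1, hu.2]) (by linarith [hv.1, hv.2])]
  grind [abs_le, abs_of_nonneg, abs_of_nonpos]

theorem dinfty_rect_of_abs_le_of_le {a b u v : ℝ} (hb : 0 ≤ b) (hu : |u| ≤ a / 2)
    (hv : b / 2 ≤ |v|) :
    dinfty (u, v) (rect a b) = |v| - b / 2 := by
  rw [dinfty_rect (by linarith [abs_nonneg u]) hb]
  grind [abs_of_nonneg, abs_of_nonpos]

theorem setIntegral_Icc_comp_abs {f : ℝ → ℝ} (hf : Continuous f) {c : ℝ} (hc : 0 ≤ c) :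
    ∫ x in Icc (-c) c, f |x| = 2 * ∫ x in 0..c, f x := by
  have hi (p q : ℝ) : IntervalIntegrable (fun x => f |x|) volume p q :=
    (hf.comp continuous_abs).intervalIntegrable p q
  have hneg : ∫ x in -c..0, f |x| = ∫ x in 0..c, f |x| := by
    simpa using (intervalIntegral.integral_comp_neg (a := 0) (b := c) (fun x => f |x|)).symm
  have hpos : ∫ x in 0..c, f |x| = ∫ x in 0..c, f x :=
    intervalIntegral.integral_congr fun x hx => by
      rw [uIcc_of_le hc] at hx
      rw [abs_of_nonneg hx.1]
  rw [integral_Icc_eq_integral_Ioc, ← intervalIntegral.integral_of_le (by linarith),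
    ← intervalIntegral.integral_add_adjacent_intervals (hi (-c) 0) (hi 0 c), hneg, hpos, two_mul]

theorem setIntegral_Icc_sdiff_Icc_comp_abs {f : ℝ → ℝ} (hf : Continuous f) {r s : ℝ}
    (hr : 0 ≤ r) (hrs : r ≤ s) :
    ∫ x in Icc (-s) s \ Icc (-r) r, f |x| = 2 * ∫ x in r..s, f x := by
  have hint : IntegrableOn (fun x => f |x|) (Icc (-s) s) :=
    (hf.comp continuous_abs).integrableOn_Icc
  rw [setIntegral_sdiff measurableSet_Icc hint (Icc_subset_Icc (neg_le_neg hrs) hrs),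
    setIntegral_Icc_comp_abs hf (hr.trans hrs), setIntegral_Icc_comp_abs hf hr, ← mul_sub,
    intervalIntegral.integral_interval_sub_left (hf.intervalIntegrable _ _)
      (hf.intervalIntegrable _ _)]

theorem integral_min_sub_abs {s c : ℝ} (hs : 0 ≤ s) (hsc : s ≤ c) :
    ∫ v in Icc (-c) c, min s (c - |v|) = 2 * c * s - s ^ 2 := by
  have hi (p q : ℝ) : IntervalIntegrable (fun t => min s (c - t)) volume p q :=
    (continuous_const.min (continuous_const.sub continuous_id)).intervalIntegrable p q
  have hflat : ∫ t in 0..c - s, min s (c - t) = ∫ _ in 0..c - s, s :=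
    intervalIntegral.integral_congr fun t ht => by
      rw [uIcc_of_le (by linarith)] at ht
      exact min_eq_left (by linarith [ht.2])
  have hslope : ∫ t in c - s..c, min s (c - t) = ∫ t in c - s..c, (c - t) :=
    intervalIntegral.integral_congr fun t ht => by
      rw [uIcc_of_le (by linarith)] at ht
      exact min_eq_right (by linarith [ht.1])
  rw [setIntegral_Icc_comp_abs (f := fun t => min s (c - t))
      (continuous_const.min (continuous_const.sub continuous_id)) (hs.trans hsc),
    ← intervalIntegral.integral_add_adjacent_intervals (hi 0 (c - s)) (hi (c - s) c), hflat,
    hslope, intervalIntegral.integral_comp_sub_left (fun t => t), intervalIntegral.integral_const,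
    integral_id]
  simp only [sub_self, sub_sub_cancel, smul_eq_mul]
  ring

theorem symmDiff_prod_of_subset {α β : Type*} {s₁ s : Set α} {t t₁ : Set β} (hs : s₁ ⊆ s)
    (ht : t ⊆ t₁) :
    symmDiff (s₁ ×ˢ t₁) (s ×ˢ t) = s₁ ×ˢ (t₁ \ t) ∪ (s \ s₁) ×ˢ t := by
  rw [Set.symmDiff_def, prod_sdiff_prod, prod_sdiff_prod, sdiff_eq_empty.2 hs,
    sdiff_eq_empty.2 ht, empty_prod, prod_empty, union_empty, empty_union]

theorem continuous_dinfty (F : Set (ℝ × ℝ)) : Continuous fun z => dinfty z F :=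
  continuous_infDist_pt _

theorem integral_dinfty_rect_horizontal {a b A B : ℝ} (hb : 0 ≤ b) (hA : 0 ≤ A) (hAa : A ≤ a)
    (hbB : b ≤ B) :
    ∫ z in Icc (-(A / 2)) (A / 2) ×ˢ (Icc (-(B / 2)) (B / 2) \ Icc (-(b / 2)) (b / 2)),
        dinfty z (rect a b) = A * (B / 2 - b / 2) ^ 2 := by
  have hstrip : ∀ z ∈ Icc (-(A / 2)) (A / 2) ×ˢ (Icc (-(B / 2)) (B / 2) \ Icc (-(b / 2)) (b / 2)),
      dinfty z (rect a b) = 1 * (|z.2| - b / 2) := by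
    rintro ⟨u, v⟩ ⟨hu, -, hv⟩
    rw [mem_Icc, ← abs_le] at hu hv
    rw [one_mul, dinfty_rect_of_abs_le_of_le hb (by linarith) (by linarith)]
  rw [setIntegral_congr_fun (measurableSet_Icc.prod (measurableSet_Icc.diff measurableSet_Icc))
      hstrip,
    Measure.volume_eq_prod, setIntegral_prod_mul (fun _ => (1 : ℝ)) (fun v => |v| - b / 2),
    setIntegral_Icc_sdiff_Icc_comp_abs (f := fun t => t - b / 2) (by fun_prop) (by linarith)
      (by linarith),
    setIntegral_const, Real.volume_real_Icc_of_le (by linarith),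
    intervalIntegral.integral_comp_sub_right (fun t => t), integral_id]
  simp only [sub_self, smul_eq_mul]
  ring

theorem integral_dinfty_rect_vertical {a b A : ℝ} (hA : 0 ≤ A) (hAa : A ≤ a) (hab : a - A ≤ b) :
    ∫ z in (Icc (-(a / 2)) (a / 2) \ Icc (-(A / 2)) (A / 2)) ×ˢ Icc (-(b / 2)) (b / 2),
        dinfty z (rect a b) = b * ((a - A) / 2) ^ 2 - 2 / 3 * ((a - A) / 2) ^ 3 := by
  set S := (Icc (-(a / 2)) (a / 2) \ Icc (-(A / 2)) (A / 2)) ×ˢ Icc (-(b / 2)) (b / 2)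
  have hS : MeasurableSet S := (measurableSet_Icc.diff measurableSet_Icc).prod measurableSet_Icc
  have hinside : ∀ z ∈ S, dinfty z (rect a b) = min (a / 2 - |z.1|) (b / 2 - |z.2|) :=
    fun z hz => dinfty_rect_of_mem ⟨hz.1.1, hz.2⟩
  have hint : IntegrableOn (fun z : ℝ × ℝ => min (a / 2 - |z.1|) (b / 2 - |z.2|)) S
      (volume.prod volume) :=
    ((by fun_prop : Continuous _).continuousOn.integrableOn_compact
      (isCompact_Icc.prod isCompact_Icc)).mono_set (prod_mono sdiff_subset subset_rfl)
  have hinner : ∀ u ∈ Icc (-(a / 2)) (a / 2) \ Icc (-(A / 2)) (A / 2),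
      ∫ v in Icc (-(b / 2)) (b / 2), min (a / 2 - |u|) (b / 2 - |v|) =
        2 * (b / 2) * (a / 2 - |u|) - (a / 2 - |u|) ^ 2 := by
    rintro u ⟨hu, hu'⟩
    rw [mem_Icc, ← abs_le] at hu hu'
    exact integral_min_sub_abs (by linarith) (by linarith)
  rw [setIntegral_congr_fun hS hinside, Measure.volume_eq_prod, setIntegral_prod _ hint,
    setIntegral_congr_fun (measurableSet_Icc.diff measurableSet_Icc) hinner,
    setIntegral_Icc_sdiff_Icc_comp_abs (f := fun t => 2 * (b / 2) * (a / 2 - t) - (a / 2 - t) ^ 2)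
      (by fun_prop) (by linarith) (by linarith),
    intervalIntegral.integral_comp_sub_left (fun t => 2 * (b / 2) * t - t ^ 2),
    intervalIntegral.integral_sub ((continuous_const_mul _).intervalIntegrable _ _)
      ((continuous_pow 2).intervalIntegrable _ _), intervalIntegral.integral_const_mul,
    integral_id, integral_pow]
  ring

theorem statement5_general (a b x y : ℝ) (hba : b ≤ a)
    (hx0 : 0 ≤ x) (hx : x < b / 2) (hy : 0 ≤ y) :
    ∫ z in symmDiff (rect (a - 2 * x) (b + 2 * y)) (rect a b),
        dinfty z (rect a b) =
      y ^ 2 * (a - 2 * x) + (4 / 3) * x ^ 3 + x ^ 2 * (b - 2 * x) := by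
  have hsub_x : Icc (-((a - 2 * x) / 2)) ((a - 2 * x) / 2) ⊆ Icc (-(a / 2)) (a / 2) :=
    Icc_subset_Icc (by linarith) (by linarith)
  have hsub_y : Icc (-(b / 2)) (b / 2) ⊆ Icc (-((b + 2 * y) / 2)) ((b + 2 * y) / 2) :=
    Icc_subset_Icc (by linarith) (by linarith)
  have hsymmDiff : symmDiff (rect (a - 2 * x) (b + 2 * y)) (rect a b) =
      Icc (-((a - 2 * x) / 2)) ((a - 2 * x) / 2) ×ˢ
          (Icc (-((b + 2 * y) / 2)) ((b + 2 * y) / 2) \ Icc (-(b / 2)) (b / 2)) ∪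
        (Icc (-(a / 2)) (a / 2) \ Icc (-((a - 2 * x) / 2)) ((a - 2 * x) / 2)) ×ˢ
          Icc (-(b / 2)) (b / 2) :=
    symmDiff_prod_of_subset hsub_x hsub_y
  have hint {s t : Set ℝ} (hs : s ⊆ Icc (-(a / 2)) (a / 2))
      (ht : t ⊆ Icc (-((b + 2 * y) / 2)) ((b + 2 * y) / 2)) :
      IntegrableOn (fun z => dinfty z (rect a b)) (s ×ˢ t) :=
    ((continuous_dinfty _).continuousOn.integrableOn_compact
      (isCompact_Icc.prod isCompact_Icc)).mono_set (prod_mono hs ht)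
  rw [hsymmDiff, setIntegral_union (disjoint_sdiff_right.set_prod_left _ _)
      ((measurableSet_Icc.diff measurableSet_Icc).prod measurableSet_Icc)
      (hint hsub_x sdiff_subset) (hint sdiff_subset hsub_y),
    integral_dinfty_rect_horizontal (by linarith) (by linarith) (by linarith) (by linarith),
    integral_dinfty_rect_vertical (by linarith) (by linarith) (by linarith)]
  ring

theorem statement5 (a b x y : ℝ) (hb : 0 < b) (hba : b ≤ a)
    (hx0 : 0 ≤ x) (hx : x < b / 2) (hy : 0 ≤ y) :
    ∫ z in symmDiff (rect (a - 2 * x) (b + 2 * y)) (rect a b),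
        dinfty z (rect a b) =
      y ^ 2 * (a - 2 * x) + (4 / 3) * x ^ 3 + x ^ 2 * (b - 2 * x) :=
  statement5_general a b x y hba hx0 hx hy
end

section
/- Let a₀ ≥ b₀ > 0 with a₀ b₀ = 1. Then there exists a unique pair of continuously differentiable functions ã, b̃ : [0, ∞) → (0, ∞) with ã(0) = a₀, b̃(0) = b₀ satisfying for all t ≥ 0 the ODE system dã/dt = −4/b̃ + 8/(ã + b̃), db̃/dt = −4/ã + 8/(ã + b̃). Moreover ã(t) b̃(t) = 1 and ã(t) ≥ b̃(t) for all t ≥ 0, and t ↦ ã(t) + b̃(t) is nonincreasing. -/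
/-!
Writing `A = exp u`, `B = exp (-u)` builds in `A * B = 1` and turns the system into the scalar
equation `u' = -4 tanh u`, which is solved explicitly by `sinh (u t) = sinh u₀ * exp (-4 t)` with
`u₀ = log a₀ ≥ 0`. Then `B ≤ A` is `0 ≤ u`, and `A + B = 2 cosh u` decreases because `u` does.
Uniqueness holds because the vector field is `C¹` on the convex quadrant `(0, ∞)²`, hence Lipschitz on
the compact set swept out by two solutions over `[0, T]`.
-/

open Set

/-- `(A, B)` is a solution on `[0, ∞)` of the ODE system
`dA/dt = -4/B + 8/(A+B)`, `dB/dt = -4/A + 8/(A+B)` with positive values and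
initial data `(a₀, b₀)`. -/
def IsODESol (a₀ b₀ : ℝ) (A B : ℝ → ℝ) : Prop :=
  A 0 = a₀ ∧ B 0 = b₀ ∧
  (∀ t ∈ Set.Ici (0 : ℝ), 0 < A t ∧ 0 < B t) ∧
  (∀ t ∈ Set.Ici (0 : ℝ),
    HasDerivWithinAt A (-4 / B t + 8 / (A t + B t)) (Set.Ici 0) t ∧
    HasDerivWithinAt B (-4 / A t + 8 / (A t + B t)) (Set.Ici 0) t)

open Real

theorem ODE_solution_unique_of_contDiffOn_of_mem_Icc_right {E : Type*} [NormedAddCommGroup E]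
    [NormedSpace ℝ E] {v : E → E} {U : Set E} {f g : ℝ → E} {a b : ℝ}
    (hU : Convex ℝ U) (hv : ContDiffOn ℝ 1 v U)
    (hf : ContinuousOn f (Icc a b)) (hf' : ∀ t ∈ Ico a b, HasDerivWithinAt f (v (f t)) (Ici t) t)
    (hfU : ∀ t ∈ Icc a b, f t ∈ U)
    (hg : ContinuousOn g (Icc a b)) (hg' : ∀ t ∈ Ico a b, HasDerivWithinAt g (v (g t)) (Ici t) t)
    (hgU : ∀ t ∈ Icc a b, g t ∈ U)
    (ha : f a = g a) :
    EqOn f g (Icc a b) := by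
  set S := f '' Icc a b ∪ g '' Icc a b
  have hS : IsCompact S := (isCompact_Icc.image_of_continuousOn hf).union
    (isCompact_Icc.image_of_continuousOn hg)
  have hSU : S ⊆ U := union_subset (image_subset_iff.2 hfU) (image_subset_iff.2 hgU)
  obtain ⟨K, hK⟩ := ((hv.locallyLipschitzOn hU).mono hSU).exists_lipschitzOnWith_of_compact hS
  exact ODE_solution_unique_of_mem_Icc_right (s := fun _ => S) (fun _ _ => hK)
    hf hf' (fun t ht => .inl ⟨t, Ico_subset_Icc_self ht, rfl⟩)
    hg hg' (fun t ht => .inr ⟨t, Ico_subset_Icc_self ht, rfl⟩) ha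

noncomputable def tanhFlow (k u₀ t : ℝ) : ℝ := arsinh (sinh u₀ * exp (-k * t))

lemma tanhFlow_zero (k u₀ : ℝ) : tanhFlow k u₀ 0 = u₀ := by
  simp [tanhFlow, arsinh_sinh]

lemma hasDerivAt_tanhFlow (k u₀ t : ℝ) :
    HasDerivAt (tanhFlow k u₀) (-k * tanh (tanhFlow k u₀ t)) t := by
  have hdecay : HasDerivAt (fun s => sinh u₀ * exp (-k * s)) (sinh u₀ * (exp (-k * t) * -k)) t :=
    ((hasDerivAt_id' t).const_mul (-k) |>.exp.const_mul (sinh u₀)).congr_deriv (by ring)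
  refine hdecay.arsinh.congr_deriv ?_
  rw [tanhFlow, tanh_arsinh, smul_eq_mul]
  ring

lemma tanhFlow_nonneg {u₀ : ℝ} (hu₀ : 0 ≤ u₀) (k t : ℝ) : 0 ≤ tanhFlow k u₀ t :=
  arsinh_nonneg_iff.2 (mul_nonneg (sinh_nonneg_iff.2 hu₀) (exp_pos _).le)

lemma tanhFlow_antitone {k u₀ : ℝ} (hk : 0 ≤ k) (hu₀ : 0 ≤ u₀) : Antitone (tanhFlow k u₀) :=
  fun s t hst => arsinh_le_arsinh.2 <| mul_le_mul_of_nonneg_left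
    (exp_le_exp.2 (by nlinarith)) (sinh_nonneg_iff.2 hu₀)

noncomputable def odeField (p : ℝ × ℝ) : ℝ × ℝ :=
  (-4 / p.2 + 8 / (p.1 + p.2), -4 / p.1 + 8 / (p.1 + p.2))

lemma contDiffOn_odeField : ContDiffOn ℝ 1 odeField (Ioi 0 ×ˢ Ioi 0) := by
  intro p hp
  have : 0 < p.1 := hp.1
  have : 0 < p.2 := hp.2
  unfold odeField
  fun_prop (disch := positivity)

lemma hasDerivAt_exp_of_tanh {u : ℝ → ℝ} {t : ℝ} (hu : HasDerivAt u (-4 * tanh (u t)) t) :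
    HasDerivAt (fun s => exp (u s)) (-4 / exp (-u t) + 8 / (exp (u t) + exp (-u t))) t := by
  refine hu.exp.congr_deriv ?_
  rw [tanh_eq_sinh_div_cosh, sinh_eq, cosh_eq, exp_neg]
  have := exp_pos (u t)
  field_simp
  ring

lemma hasDerivAt_exp_neg_of_tanh {u : ℝ → ℝ} {t : ℝ} (hu : HasDerivAt u (-4 * tanh (u t)) t) :
    HasDerivAt (fun s => exp (-u s)) (-4 / exp (u t) + 8 / (exp (u t) + exp (-u t))) t := by
  refine hu.neg.exp.congr_deriv ?_
  rw [Pi.neg_apply, tanh_eq_sinh_div_cosh, sinh_eq, cosh_eq, exp_neg]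
  have := exp_pos (u t)
  field_simp
  ring

lemma isODESol_exp_tanhFlow {a₀ b₀ : ℝ} (ha₀ : 0 < a₀) (hab : a₀ * b₀ = 1) :
    IsODESol a₀ b₀ (fun t => exp (tanhFlow 4 (log a₀) t))
      (fun t => exp (-tanhFlow 4 (log a₀) t)) := by
  refine ⟨?_, ?_, fun t _ => ⟨exp_pos _, exp_pos _⟩, fun t _ =>
    ⟨(hasDerivAt_exp_of_tanh (hasDerivAt_tanhFlow 4 _ t)).hasDerivWithinAt,
      (hasDerivAt_exp_neg_of_tanh (hasDerivAt_tanhFlow 4 _ t)).hasDerivWithinAt⟩⟩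
  · simp only [tanhFlow_zero, exp_log ha₀]
  · simp only [tanhFlow_zero, exp_neg, exp_log ha₀]
    exact (eq_inv_of_mul_eq_one_right hab).symm

namespace IsODESol

variable {a₀ b₀ : ℝ} {A B : ℝ → ℝ}

lemma hasDerivWithinAt_prod (h : IsODESol a₀ b₀ A B) {t : ℝ} (ht : t ∈ Ici 0) :
    HasDerivWithinAt (fun s => (A s, B s)) (odeField (A t, B t)) (Ici 0) t :=
  (h.2.2.2 t ht).1.prodMk (h.2.2.2 t ht).2

lemma unique {A' B' : ℝ → ℝ} (h : IsODESol a₀ b₀ A B) (h' : IsODESol a₀ b₀ A' B') :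
    ∀ t ∈ Ici (0 : ℝ), A' t = A t ∧ B' t = B t := by
  intro T hT
  have hcont {A B : ℝ → ℝ} (h : IsODESol a₀ b₀ A B) :
      ContinuousOn (fun s => (A s, B s)) (Icc 0 T) := fun s hs =>
    (h.hasDerivWithinAt_prod hs.1).continuousWithinAt.mono Icc_subset_Ici_self
  have hderiv {A B : ℝ → ℝ} (h : IsODESol a₀ b₀ A B) (s : ℝ) (hs : s ∈ Ico 0 T) :
      HasDerivWithinAt (fun s => (A s, B s)) (odeField (A s, B s)) (Ici s) s :=
    (h.hasDerivWithinAt_prod hs.1).mono (Ici_subset_Ici.2 hs.1)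
  have hinit : (A' 0, B' 0) = (A 0, B 0) := by rw [h.1, h.2.1, h'.1, h'.2.1]
  have := ODE_solution_unique_of_contDiffOn_of_mem_Icc_right ((convex_Ioi 0).prod (convex_Ioi 0))
    contDiffOn_odeField (hcont h') (hderiv h') (fun s hs => h'.2.2.1 s hs.1)
    (hcont h) (hderiv h) (fun s hs => h.2.2.1 s hs.1) hinit ⟨hT, le_rfl⟩
  exact Prod.ext_iff.1 this

end IsODESol

theorem statement8 (a₀ b₀ : ℝ) (hb : 0 < b₀) (hba : b₀ ≤ a₀)
    (hab : a₀ * b₀ = 1) :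
    ∃ A B : ℝ → ℝ, IsODESol a₀ b₀ A B ∧
      (∀ A' B' : ℝ → ℝ, IsODESol a₀ b₀ A' B' →
        ∀ t ∈ Set.Ici (0 : ℝ), A' t = A t ∧ B' t = B t) ∧
      (∀ t ∈ Set.Ici (0 : ℝ), A t * B t = 1 ∧ B t ≤ A t) ∧
      AntitoneOn (fun t => A t + B t) (Set.Ici 0) := by
  have ha₀ : 0 < a₀ := hb.trans_le hba
  have hu₀ : 0 ≤ log a₀ := log_nonneg (by nlinarith)
  have hsol := isODESol_exp_tanhFlow ha₀ hab
  refine ⟨_, _, hsol, fun A' B' h' => hsol.unique h', fun t _ => ⟨?_, ?_⟩, ?_⟩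
  · rw [← exp_add, add_neg_cancel, exp_zero]
  · exact exp_le_exp.2 (neg_le_self (tanhFlow_nonneg hu₀ 4 t))
  · have hcosh (x : ℝ) : exp x + exp (-x) = 2 * cosh x := by rw [cosh_eq]; ring
    intro s _ t _ hst
    simp only [hcosh]
    gcongr 2 * ?_
    rw [cosh_le_cosh, abs_of_nonneg (tanhFlow_nonneg hu₀ 4 t),
      abs_of_nonneg (tanhFlow_nonneg hu₀ 4 s)]
    exact tanhFlow_antitone (by norm_num) hu₀ hst
end

section
/- Let a₀ > b₀ > 0 with a₀ b₀ = 1 and a₀ + b₀ < Λ, and let C > 0. Suppose that for each sufficiently small τ > 0 there are sequences (a_τ(k))_{k∈ℕ}, (b_τ(k))_{k∈ℕ} of positive reals with a_τ(0) = a₀, b_τ(0) = b₀, a_τ(k) b_τ(k) = 1 and a_τ(k+1) + b_τ(k+1) ≤ a_τ(k) + b_τ(k) for all k, defined by a_τ(k+1) = a_τ(k) − 2 x_τ(k) and b_τ(k+1) = b_τ(k) + 2 b_τ(k) x_τ(k)/(a_τ(k) − 2 x_τ(k)), where the increments satisfy | x_τ(k) − τ · 2(a_τ(k) − b_τ(k))/(b_τ(k)(a_τ(k)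 + b_τ(k))) | ≤ C τ² for all k. Define the piecewise-constant interpolations a^τ(t) := a_τ(⌊t/τ⌋) and b^τ(t) := b_τ(⌊t/τ⌋). Then, as τ → 0, a^τ and b^τ converge locally uniformly on [0, ∞) to the unique solution (ã, b̃) of the ODE system dã/dt = −4/b̃ + 8/(ã + b̃), db̃/dt = −4/ã + 8/(ã + b̃) with initial data ã(0) = a₀, b̃(0) = b₀. -/
open Set Filter

/-!
On the branch `a * b = 1`, `a > 0` of the hyperbola both coordinates are 1-Lipschitz functions of
the difference `d = a - b`, so it suffices to follow `d`. Along the ODE the product `a * b` is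
conserved and then `d' = -4 d`; hence the solution is unique, with `d = (a₀ - b₀) e^{-4t}`. Along
the scheme `d_{k+1} = (1 - 4τ) d_k + O(τ²)`, with a constant depending only on `C` and on
`a₀ + b₀ ≥ a_k + b_k`. Summing these errors, `d_k = e^{-4kτ} d₀ + O(kτ²)`, which is `O(τ)` on every
bounded time interval.
-/

open Real Topology

/-- `(hyperbolaCoord d, hyperbolaCoord (-d))` is the point of the branch `a * b = 1`, `a > 0` of
the hyperbola with `a - b = d`. -/
noncomputable def hyperbolaCoord (d : ℝ) : ℝ := exp (arsinh (d / 2))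

lemma hyperbolaCoord_pos (d : ℝ) : 0 < hyperbolaCoord d := exp_pos _

lemma hyperbolaCoord_sub_neg (d : ℝ) : hyperbolaCoord d - hyperbolaCoord (-d) = d := by
  have := sinh_arsinh (d / 2)
  rw [sinh_eq] at this
  simp only [hyperbolaCoord, neg_div, arsinh_neg]
  linarith

lemma hyperbolaCoord_add_neg (d : ℝ) :
    hyperbolaCoord d + hyperbolaCoord (-d) = 2 * √(1 + (d / 2) ^ 2) := by
  rw [← cosh_arsinh, cosh_eq, hyperbolaCoord, hyperbolaCoord, neg_div, arsinh_neg]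
  ring

lemma hyperbolaCoord_mul_neg (d : ℝ) : hyperbolaCoord d * hyperbolaCoord (-d) = 1 := by
  rw [hyperbolaCoord, hyperbolaCoord, neg_div, arsinh_neg, ← exp_add, add_neg_cancel, exp_zero]

lemma hyperbolaCoord_sub_of_mul_eq_one {a b : ℝ} (ha : 0 < a) (hab : a * b = 1) :
    hyperbolaCoord (a - b) = a := by
  have hb : b = exp (-log a) := by
    rw [exp_neg, exp_log ha, eq_inv_of_mul_eq_one_right hab]
  rw [hyperbolaCoord, hb, ← exp_log ha, log_exp, ← sinh_eq, arsinh_sinh]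

lemma hyperbolaCoord_monotone : Monotone hyperbolaCoord := fun _ _ h =>
  exp_le_exp.2 (arsinh_le_arsinh.2 (by linarith))

lemma abs_hyperbolaCoord_sub_le (d d' : ℝ) :
    |hyperbolaCoord d - hyperbolaCoord d'| ≤ |d - d'| := by
  wlog h : d' ≤ d generalizing d d'
  · rw [abs_sub_comm, abs_sub_comm d]
    exact this d' d (le_of_not_ge h)
  have h₁ := hyperbolaCoord_monotone h
  have h₂ := hyperbolaCoord_monotone (neg_le_neg h)
  have := hyperbolaCoord_sub_neg d
  have := hyperbolaCoord_sub_neg d'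
  rw [abs_of_nonneg (sub_nonneg.2 h₁), abs_of_nonneg (sub_nonneg.2 h)]
  linarith

lemma hasDerivAt_hyperbolaCoord (d : ℝ) :
    HasDerivAt hyperbolaCoord
      (hyperbolaCoord d / (hyperbolaCoord d + hyperbolaCoord (-d))) d := by
  have hsqrt : 0 < √(1 + (d / 2) ^ 2) := by positivity
  rw [hyperbolaCoord_add_neg]
  refine ((((hasDerivAt_id d).div_const 2).arsinh).exp).congr_deriv ?_
  simp only [id, smul_eq_mul, hyperbolaCoord]
  field_simp

lemma neg_four_div_add_eight_div_of_mul_eq_one {a b : ℝ} (hab : a * b = 1) (hs : a + b ≠ 0) :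
    -4 / b + 8 / (a + b) = -4 * (a / (a + b)) * (a - b) := by
  have hb : b ≠ 0 := right_ne_zero_of_mul_eq_one hab
  field_simp
  linear_combination (4 * a - 4 * b) * hab

lemma hasDerivAt_hyperbolaCoord_comp {D : ℝ → ℝ} {t : ℝ} (hD : HasDerivAt D (-4 * D t) t) :
    HasDerivAt (fun s => hyperbolaCoord (D s))
      (-4 / hyperbolaCoord (-D t) + 8 / (hyperbolaCoord (D t) + hyperbolaCoord (-D t))) t := by
  have hs : hyperbolaCoord (D t) + hyperbolaCoord (-D t) ≠ 0 :=
    (add_pos (hyperbolaCoord_pos _) (hyperbolaCoord_pos _)).ne'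
  rw [neg_four_div_add_eight_div_of_mul_eq_one (hyperbolaCoord_mul_neg _) hs,
    hyperbolaCoord_sub_neg]
  exact ((hasDerivAt_hyperbolaCoord (D t)).comp t hD).congr_deriv (by ring)

lemma isODESol_hyperbolaCoord {a₀ b₀ : ℝ} (ha₀ : 0 < a₀) (hab : a₀ * b₀ = 1) :
    IsODESol a₀ b₀ (fun t => hyperbolaCoord ((a₀ - b₀) * exp (-4 * t)))
      (fun t => hyperbolaCoord (-((a₀ - b₀) * exp (-4 * t)))) := by
  have hb₀ : 0 < b₀ := pos_of_mul_pos_right (hab ▸ one_pos) ha₀.le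
  have hD (t : ℝ) : HasDerivAt (fun s => (a₀ - b₀) * exp (-4 * s))
      (-4 * ((a₀ - b₀) * exp (-4 * t))) t :=
    ((((hasDerivAt_id t).const_mul (-4)).exp).const_mul (a₀ - b₀)).congr_deriv
      (by simp only [id]; ring)
  refine ⟨?_, ?_, fun t _ => ⟨hyperbolaCoord_pos _, hyperbolaCoord_pos _⟩, fun t _ => ⟨?_, ?_⟩⟩
  · simp only [mul_zero, exp_zero, mul_one]
    exact hyperbolaCoord_sub_of_mul_eq_one ha₀ hab
  · simp only [mul_zero, exp_zero, mul_one, neg_sub]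
    exact hyperbolaCoord_sub_of_mul_eq_one hb₀ (by rw [mul_comm, hab])
  · exact (hasDerivAt_hyperbolaCoord_comp (hD t)).hasDerivWithinAt
  · have := hasDerivAt_hyperbolaCoord_comp (D := fun s => -((a₀ - b₀) * exp (-4 * s)))
      ((hD t).neg.congr_deriv (by ring))
    rw [neg_neg, add_comm (hyperbolaCoord (-_))] at this
    exact this.hasDerivWithinAt

lemma eq_of_hasDerivWithinAt_Ici_zero {f : ℝ → ℝ} {a : ℝ}
    (hf : ∀ t ∈ Ici a, HasDerivWithinAt f 0 (Ici a) t) : ∀ t ∈ Ici a, f t = f a := fun t ht =>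
  constant_of_has_deriv_right_zero
    (fun s hs => (hf s hs.1).continuousWithinAt.mono Icc_subset_Ici_self)
    (fun s hs => (hf s hs.1).mono (Ici_subset_Ici.2 hs.1)) t ⟨ht, le_rfl⟩

lemma IsODESol.eq_hyperbolaCoord {a₀ b₀ : ℝ} {P Q : ℝ → ℝ} (h : IsODESol a₀ b₀ P Q)
    (hab : a₀ * b₀ = 1) {t : ℝ} (ht : t ∈ Ici 0) :
    P t = hyperbolaCoord ((a₀ - b₀) * exp (-4 * t)) ∧
      Q t = hyperbolaCoord (-((a₀ - b₀) * exp (-4 * t))) := by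
  obtain ⟨hP₀, hQ₀, hpos, hder⟩ := h
  have hprod : ∀ s ∈ Ici (0 : ℝ), P s * Q s = 1 := by
    refine fun s hs => (eq_of_hasDerivWithinAt_Ici_zero (f := fun s => P s * Q s)
      (fun s hs => ?_) s hs).trans (by rw [hP₀, hQ₀, hab])
    obtain ⟨hP, hQ⟩ := hpos s hs
    refine ((hder s hs).1.mul (hder s hs).2).congr_deriv ?_
    field_simp
    ring
  have hdiff : P t - Q t = (a₀ - b₀) * exp (-4 * t) := by
    have key := eq_of_hasDerivWithinAt_Ici_zero (f := fun s => (P s - Q s) * exp (4 * s))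
      (fun s hs => ?_) t ht
    · simp only [hP₀, hQ₀, mul_zero, exp_zero, mul_one] at key
      rw [← key, mul_assoc, ← exp_add]
      simp
    obtain ⟨hP, hQ⟩ := hpos s hs
    have he := ((hasDerivAt_id s).const_mul 4).exp.hasDerivWithinAt (s := Ici 0)
    refine (((hder s hs).1.sub (hder s hs).2).mul he).congr_deriv ?_
    have := hprod s hs
    field_simp
    simp only [id, Pi.sub_apply]
    linear_combination (4 * exp (4 * s) * (P s ^ 2 - Q s ^ 2)) * this
  obtain ⟨hP, hQ⟩ := hpos t ht
  rw [← hdiff, neg_sub, hyperbolaCoord_sub_of_mul_eq_one hP (hprod t ht),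
    hyperbolaCoord_sub_of_mul_eq_one hQ (by rw [mul_comm]; exact hprod t ht)]
  exact ⟨rfl, rfl⟩

lemma abs_sub_pow_mul_le {d : ℕ → ℝ} {q ε : ℝ} (hq : |q| ≤ 1)
    (h : ∀ k, |d (k + 1) - q * d k| ≤ ε) (k : ℕ) : |d k - q ^ k * d 0| ≤ k * ε := by
  induction k with
  | zero => simp
  | succ k ih =>
    calc |d (k + 1) - q ^ (k + 1) * d 0|
        = |(d (k + 1) - q * d k) + q * (d k - q ^ k * d 0)| := by ring_nf
      _ ≤ |d (k + 1) - q * d k| + |q| * |d k - q ^ k * d 0| := by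
        rw [← abs_mul]; exact abs_add_le _ _
      _ ≤ ε + 1 * (k * ε) := add_le_add (h k) (mul_le_mul hq ih (abs_nonneg _) zero_le_one)
      _ = (k + 1 : ℕ) * ε := by push_cast; ring

lemma abs_exp_neg_mul_sub_le {c s t : ℝ} (hc : 0 ≤ c) (hs : 0 ≤ s) (hst : s ≤ t) :
    |exp (-c * s) - exp (-c * t)| ≤ c * (t - s) := by
  have hmono : exp (-c * t) ≤ exp (-c * s) := exp_le_exp.2 (by nlinarith)
  have hsplit : exp (-c * t) = exp (-c * s) * exp (-(c * (t - s))) := by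
    rw [← exp_add]; ring_nf
  have h1 : exp (-c * s) ≤ 1 := exp_le_one_iff.2 (by nlinarith)
  have h2 := one_sub_le_exp_neg (c * (t - s))
  rw [abs_of_nonneg (sub_nonneg.2 hmono), hsplit]
  nlinarith [exp_pos (-c * s)]

lemma abs_one_sub_four_mul_sub_exp_le {τ : ℝ} (hτ : 0 ≤ τ) (hτ4 : τ ≤ 1 / 4) :
    |(1 - 4 * τ) - exp (-4 * τ)| ≤ 16 * τ ^ 2 := by
  have := abs_exp_sub_one_sub_id_le (x := -4 * τ) (by rw [abs_le]; constructor <;> linarith)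
  rw [abs_sub_comm]
  convert this using 2 <;> ring

def stepConst (S C : ℝ) : ℝ := 8 * S ^ 4 * (2 * S + C) + 2 * C * (1 + S ^ 2)

lemma abs_diff_step_sub_le {a b a' b' x τ C S : ℝ} (hτ : 0 ≤ τ) (hτ1 : τ ≤ 1) (hC : 0 ≤ C)
    (ha : 0 < a) (hb : 0 < b) (hb' : 0 < b') (hab : a * b = 1) (hab' : a' * b' = 1)
    (hS : a + b ≤ S) (hb'S : b' ≤ S) (hrec : a' = a - 2 * x)
    (hx : |x - τ * (2 * (a - b) / (b * (a + b)))| ≤ C * τ ^ 2) :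
    |(a' - b') - (1 - 4 * τ) * (a - b)| ≤ stepConst S C * τ ^ 2 := by
  rw [show b * (a + b) = 1 + b ^ 2 by linear_combination hab] at hx
  generalize hx₀_def : τ * (2 * (a - b) / (1 + b ^ 2)) = x₀ at hx
  have hx₀ : |x₀| ≤ 2 * S * τ := by
    have hab_abs : |a - b| ≤ S := abs_sub_le_iff.2 ⟨by linarith, by linarith⟩
    rw [← hx₀_def, abs_mul, abs_of_nonneg hτ, abs_div, abs_mul, abs_two]
    calc τ * (2 * |a - b| / |1 + b ^ 2|) ≤ τ * (2 * |a - b|) := by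
          gcongr; exact div_le_self (by positivity) (by rw [abs_of_pos (by positivity)]; nlinarith)
      _ ≤ 2 * S * τ := by nlinarith
  have hxabs : |x| ≤ (2 * S + C) * τ := by
    have := abs_sub_abs_le_abs_sub x x₀
    have : C * τ ^ 2 ≤ C * τ := by
      have := mul_le_mul_of_nonneg_left hτ1 (mul_nonneg hC hτ)
      nlinarith
    nlinarith
  have key : (a' - b') - (1 - 4 * τ) * (a - b) =
      -4 * x₀ * x * b ^ 2 * b' - 2 * (x - x₀) * (1 + b * b') := by
    have hb'b : b' - b = 2 * x * b * b' := by
      linear_combination (-b') * hab + b * hab' - (b * b') * hrec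
    have hbb' : b * b' - 2 * x * b ^ 2 * b' = b ^ 2 := by
      linear_combination (-b * b') * hab + (-b ^ 2 * b') * hrec + b ^ 2 * hab'
    have hx₀' : x₀ * (1 + b ^ 2) = 2 * τ * (a - b) := by
      rw [← hx₀_def]; field_simp
    -- for `x = x₀` only the first term is left, and it is quadratic in `τ` since `x₀ = O(τ)`
    linear_combination hrec - hb'b - 2 * x₀ * hbb' - 2 * hx₀'
  have hbS : b ≤ S := by linarith
  have hS₀ : 0 ≤ S := by linarith
  rw [key]
  calc |-4 * x₀ * x * b ^ 2 * b' - 2 * (x - x₀) * (1 + b * b')|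
      ≤ 4 * |x₀| * |x| * b ^ 2 * b' + 2 * |x - x₀| * (1 + b * b') := by
        refine (abs_sub _ _).trans_eq ?_
        simp only [abs_mul, abs_pow, abs_of_pos hb, abs_of_pos hb', abs_neg, abs_two,
          abs_of_pos (by positivity : (0 : ℝ) < 1 + b * b')]
        norm_num
    _ ≤ 4 * (2 * S * τ) * ((2 * S + C) * τ) * S ^ 2 * S + 2 * (C * τ ^ 2) * (1 + S * S) := by
        gcongr
    _ = stepConst S C * τ ^ 2 := by rw [stepConst]; ring

structure IsApproxScheme (τ C : ℝ) (a b x : ℕ → ℝ) : Prop where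
  pos : ∀ k, 0 < a k ∧ 0 < b k
  mul_eq_one : ∀ k, a k * b k = 1
  sum_succ_le : ∀ k, a (k + 1) + b (k + 1) ≤ a k + b k
  succ_eq : ∀ k, a (k + 1) = a k - 2 * x k
  abs_sub_le : ∀ k, |x k - τ * (2 * (a k - b k) / (b k * (a k + b k)))| ≤ C * τ ^ 2

namespace IsApproxScheme

variable {τ C : ℝ} {a b x : ℕ → ℝ}

lemma sum_le (h : IsApproxScheme τ C a b x) (k : ℕ) : a k + b k ≤ a 0 + b 0 :=
  antitone_nat_of_succ_le (f := fun k => a k + b k) h.sum_succ_le (Nat.zero_le k)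

lemma abs_diff_le (h : IsApproxScheme τ C a b x) (k : ℕ) : |a k - b k| ≤ a 0 + b 0 :=
  (abs_sub_le_iff.2 ⟨by linarith [(h.pos k).2], by linarith [(h.pos k).1]⟩).trans (h.sum_le k)

lemma abs_diff_sub_exp_pow_le (h : IsApproxScheme τ C a b x) (hτ : 0 ≤ τ) (hτ4 : τ ≤ 1 / 4)
    (hC : 0 ≤ C) (k : ℕ) :
    |(a k - b k) - exp (-4 * τ) ^ k * (a 0 - b 0)| ≤
      k * ((stepConst (a 0 + b 0) C + 16 * (a 0 + b 0)) * τ ^ 2) := by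
  set S := a 0 + b 0
  refine abs_sub_pow_mul_le (d := fun k => a k - b k)
    (by rw [abs_of_pos (exp_pos _)]; exact exp_le_one_iff.2 (by linarith)) (fun k => ?_) k
  have hstep := abs_diff_step_sub_le hτ (by linarith) hC (h.pos k).1 (h.pos k).2
    (h.pos (k + 1)).2 (h.mul_eq_one k) (h.mul_eq_one (k + 1)) (h.sum_le k)
    (by linarith [h.sum_le (k + 1), (h.pos (k + 1)).1]) (h.succ_eq k) (h.abs_sub_le k)
  calc |(a (k + 1) - b (k + 1)) - exp (-4 * τ) * (a k - b k)|
      = |((a (k + 1) - b (k + 1)) - (1 - 4 * τ) * (a k - b k)) +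
          ((1 - 4 * τ) - exp (-4 * τ)) * (a k - b k)| := by ring_nf
    _ ≤ stepConst S C * τ ^ 2 + 16 * τ ^ 2 * S := by
        grw [abs_add_le, abs_mul, hstep, abs_one_sub_four_mul_sub_exp_le hτ hτ4, h.abs_diff_le k]
    _ = (stepConst S C + 16 * S) * τ ^ 2 := by ring

lemma abs_diff_floor_sub_le (h : IsApproxScheme τ C a b x) (hτ : 0 < τ) (hτ4 : τ ≤ 1 / 4)
    (hC : 0 ≤ C) {t T : ℝ} (ht : 0 ≤ t) (htT : t ≤ T) :
    |(a ⌊t / τ⌋₊ - b ⌊t / τ⌋₊) - (a 0 - b 0) * exp (-4 * t)| ≤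
      ((stepConst (a 0 + b 0) C + 16 * (a 0 + b 0)) * T + 4 * (a 0 + b 0)) * τ := by
  set S := a 0 + b 0
  set k := ⌊t / τ⌋₊
  have hkt : k * τ ≤ t := (le_div_iff₀ hτ).1 (Nat.floor_le (div_nonneg ht hτ.le))
  have htk : t - k * τ ≤ τ := by
    have := (div_lt_iff₀ hτ).1 (Nat.lt_floor_add_one (t / τ))
    linarith
  have hS : 0 ≤ S := (abs_nonneg _).trans (h.abs_diff_le 0)
  have hK : 0 ≤ stepConst S C + 16 * S := by rw [stepConst]; positivity
  have hdiscrete := h.abs_diff_sub_exp_pow_le hτ.le hτ4 hC k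
  have hexp : |exp (-4 * (k * τ)) - exp (-4 * t)| ≤ 4 * τ := by
    have := abs_exp_neg_mul_sub_le (c := 4) (by norm_num) (by positivity) hkt
    linarith
  rw [← exp_nat_mul, show (k : ℝ) * (-4 * τ) = -4 * (k * τ) by ring] at hdiscrete
  calc |(a k - b k) - (a 0 - b 0) * exp (-4 * t)|
      = |((a k - b k) - exp (-4 * (k * τ)) * (a 0 - b 0)) +
          (a 0 - b 0) * (exp (-4 * (k * τ)) - exp (-4 * t))| := by ring_nf
    _ ≤ k * ((stepConst S C + 16 * S) * τ ^ 2) + S * (4 * τ) := by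
        grw [abs_add_le, abs_mul, hdiscrete, h.abs_diff_le 0, hexp]
    _ = (stepConst S C + 16 * S) * (k * τ) * τ + 4 * S * τ := by ring
    _ ≤ ((stepConst S C + 16 * S) * T + 4 * S) * τ := by
        have := mul_le_mul_of_nonneg_left (hkt.trans htT) hK
        nlinarith

end IsApproxScheme

lemma tendstoLocallyUniformlyOn_Ici_of_abs_sub_le {ι : Type*} {l : Filter ι}
    {F : ι → ℝ → ℝ} {f : ℝ → ℝ} {g : ι → ℝ} {a : ℝ} (hg : Tendsto g l (𝓝 0))
    (h : ∀ T, ∃ M, ∀ᶠ i in l, ∀ t ∈ Icc a T, |F i t - f t| ≤ M * g i) :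
    TendstoLocallyUniformlyOn F f l (Ici a) := by
  refine tendstoLocallyUniformlyOn_of_forall_exists_nhds fun t₀ _ =>
    ⟨Icc a (t₀ + 1), inter_mem_nhdsWithin _ (Iic_mem_nhds (lt_add_one t₀)), ?_⟩
  obtain ⟨M, hM⟩ := h (t₀ + 1)
  have hMg : Tendsto (fun i => M * g i) l (𝓝 0) := by simpa using hg.const_mul M
  refine Metric.tendstoUniformlyOn_iff.2 fun ε hε => ?_
  filter_upwards [hM, hMg.eventually (gt_mem_nhds hε)] with i hi hiε t ht
  rw [dist_comm, Real.dist_eq]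
  exact (hi t ht).trans_lt hiε

theorem statement9_general (a₀ b₀ C : ℝ) (hb : 0 < b₀)
    (hab : a₀ * b₀ = 1) (hC : 0 < C)
    (τmax : ℝ)
    (A B X : ℝ → ℕ → ℝ)
    (hinit : ∀ τ ∈ Set.Ioo (0 : ℝ) τmax, A τ 0 = a₀ ∧ B τ 0 = b₀)
    (hpos : ∀ τ ∈ Set.Ioo (0 : ℝ) τmax, ∀ k, 0 < A τ k ∧ 0 < B τ k)
    (harea : ∀ τ ∈ Set.Ioo (0 : ℝ) τmax, ∀ k, A τ k * B τ k = 1)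
    (hmono : ∀ τ ∈ Set.Ioo (0 : ℝ) τmax, ∀ k,
      A τ (k + 1) + B τ (k + 1) ≤ A τ k + B τ k)
    (hrecA : ∀ τ ∈ Set.Ioo (0 : ℝ) τmax, ∀ k,
      A τ (k + 1) = A τ k - 2 * X τ k)
    (hX : ∀ τ ∈ Set.Ioo (0 : ℝ) τmax, ∀ k,
      |X τ k - τ * (2 * (A τ k - B τ k) / (B τ k * (A τ k + B τ k)))| ≤
        C * τ ^ 2) :
    ∃ Aode Bode : ℝ → ℝ, IsODESol a₀ b₀ Aode Bode ∧
      (∀ A' B' : ℝ → ℝ, IsODESol a₀ b₀ A' B' →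
        ∀ t ∈ Set.Ici (0 : ℝ), A' t = Aode t ∧ B' t = Bode t) ∧
      TendstoLocallyUniformlyOn (fun τ t => A τ ⌊t / τ⌋₊) Aode
        (nhdsWithin 0 (Set.Ioo 0 τmax)) (Set.Ici 0) ∧
      TendstoLocallyUniformlyOn (fun τ t => B τ ⌊t / τ⌋₊) Bode
        (nhdsWithin 0 (Set.Ioo 0 τmax)) (Set.Ici 0) := by
  have ha : 0 < a₀ := pos_of_mul_pos_left (hab ▸ one_pos) hb.le
  have hscheme : ∀ τ ∈ Ioo 0 τmax, IsApproxScheme τ C (A τ) (B τ) (X τ) := fun τ hτ =>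
    ⟨hpos τ hτ, harea τ hτ, hmono τ hτ, hrecA τ hτ, hX τ hτ⟩
  have hdiff : ∀ T, ∃ M, ∀ᶠ τ in 𝓝[Ioo 0 τmax] 0, ∀ t ∈ Icc 0 T,
      |(A τ ⌊t / τ⌋₊ - B τ ⌊t / τ⌋₊) - (a₀ - b₀) * exp (-4 * t)| ≤ M * τ := fun T =>
    ⟨(stepConst (a₀ + b₀) C + 16 * (a₀ + b₀)) * T + 4 * (a₀ + b₀), by
      filter_upwards [self_mem_nhdsWithin,
        nhdsWithin_le_nhds (eventually_le_nhds (by norm_num : (0 : ℝ) < 1 / 4))]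
        with τ hτ hτ4 t ht
      obtain ⟨hA₀, hB₀⟩ := hinit τ hτ
      simpa only [hA₀, hB₀] using
        (hscheme τ hτ).abs_diff_floor_sub_le hτ.1 hτ4 hC.le ht.1 ht.2⟩
  have hτ_lim : Tendsto (fun τ : ℝ => τ) (𝓝[Ioo 0 τmax] 0) (𝓝 0) := nhdsWithin_le_nhds
  refine ⟨_, _, isODESol_hyperbolaCoord ha hab, fun P Q h t ht => h.eq_hyperbolaCoord hab ht,
    tendstoLocallyUniformlyOn_Ici_of_abs_sub_le hτ_lim fun T => ?_,
    tendstoLocallyUniformlyOn_Ici_of_abs_sub_le hτ_lim fun T => ?_⟩ <;>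
  obtain ⟨M, hM⟩ := hdiff T <;>
  refine ⟨M, hM.mp (eventually_mem_nhdsWithin.mono fun τ hτ hτM t ht => ?_)⟩
  · rw [← hyperbolaCoord_sub_of_mul_eq_one (hpos τ hτ _).1 (harea τ hτ _)]
    exact (abs_hyperbolaCoord_sub_le _ _).trans (hτM t ht)
  · rw [← hyperbolaCoord_sub_of_mul_eq_one (hpos τ hτ _).2 (by rw [mul_comm, harea τ hτ])]
    refine (abs_hyperbolaCoord_sub_le _ _).trans (Eq.trans_le ?_ (hτM t ht))
    rw [← abs_neg]
    congr 1
    ring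

theorem statement9 (a₀ b₀ Λ C : ℝ) (hb : 0 < b₀) (hba : b₀ < a₀)
    (hab : a₀ * b₀ = 1) (hΛ : a₀ + b₀ < Λ) (hC : 0 < C)
    (τmax : ℝ) (hτmax : 0 < τmax)
    (A B X : ℝ → ℕ → ℝ)
    (hinit : ∀ τ ∈ Set.Ioo (0 : ℝ) τmax, A τ 0 = a₀ ∧ B τ 0 = b₀)
    (hpos : ∀ τ ∈ Set.Ioo (0 : ℝ) τmax, ∀ k, 0 < A τ k ∧ 0 < B τ k)
    (harea : ∀ τ ∈ Set.Ioo (0 : ℝ) τmax, ∀ k, A τ k * B τ k = 1)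
    (hmono : ∀ τ ∈ Set.Ioo (0 : ℝ) τmax, ∀ k,
      A τ (k + 1) + B τ (k + 1) ≤ A τ k + B τ k)
    (hrecA : ∀ τ ∈ Set.Ioo (0 : ℝ) τmax, ∀ k,
      A τ (k + 1) = A τ k - 2 * X τ k)
    (hrecB : ∀ τ ∈ Set.Ioo (0 : ℝ) τmax, ∀ k,
      B τ (k + 1) = B τ k + 2 * B τ k * X τ k / (A τ k - 2 * X τ k))
    (hX : ∀ τ ∈ Set.Ioo (0 : ℝ) τmax, ∀ k,
      |X τ k - τ * (2 * (A τ k - B τ k) / (B τ k * (A τ k + B τ k)))| ≤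
        C * τ ^ 2) :
    ∃ Aode Bode : ℝ → ℝ, IsODESol a₀ b₀ Aode Bode ∧
      (∀ A' B' : ℝ → ℝ, IsODESol a₀ b₀ A' B' →
        ∀ t ∈ Set.Ici (0 : ℝ), A' t = Aode t ∧ B' t = Bode t) ∧
      TendstoLocallyUniformlyOn (fun τ t => A τ ⌊t / τ⌋₊) Aode
        (nhdsWithin 0 (Set.Ioo 0 τmax)) (Set.Ici 0) ∧
      TendstoLocallyUniformlyOn (fun τ t => B τ ⌊t / τ⌋₊) Bode
        (nhdsWithin 0 (Set.Ioo 0 τmax)) (Set.Ici 0) :=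
  statement9_general a₀ b₀ C hb hab hC τmax A B X hinit hpos harea hmono hrecA hX
end

section
/- Let ã, b̃ : [0, ∞) → (0, ∞) be differentiable functions satisfying dã/dt = −4/b̃ + 8/(ã + b̃) and db̃/dt = −4/ã + 8/(ã + b̃) with ã(t) b̃(t) = 1 and ã(t) ≥ b̃(t) for all t ≥ 0. Then for all t ≥ 0, ã(t)/b̃(t) − 1 ≤ (ã(0)/b̃(0) − 1) e^{−4t}. In particular ã(t) → 1 and b̃(t) → 1 as t → ∞, i.e. the evolving rectangles converge exponentially fast to the unit square. -/
/-!
Along the flow with `A * B = 1` the ratio `r = A / B` satisfies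
`r' = -8 (r - 1) / (B (A + B))`, and `B (A + B) = 1 + B² ≤ 2` because `B ≤ A`; hence
`(r - 1)' ≤ -4 (r - 1)` and Grönwall gives the exponential decay. Since `A² = r` and `B = A⁻¹`,
both sides tend to `1`.
-/

open Set Filter Topology Real

theorem le_mul_exp_of_hasDerivWithinAt_le_mul {f f' : ℝ → ℝ} {a c : ℝ}
    (hf : ∀ t ∈ Ici a, HasDerivWithinAt f (f' t) (Ici a) t)
    (bound : ∀ t ∈ Ici a, f' t ≤ c * f t) {t : ℝ} (ht : a ≤ t) :
    f t ≤ f a * exp (c * (t - a)) := by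
  have := le_gronwallBound_of_liminf_deriv_right_le (f' := f') (ε := 0)
    (fun x hx => (hf x hx.1).continuousWithinAt.mono Icc_subset_Ici_self)
    (fun x hx _ hr => ((hf x hx.1).mono (Ici_subset_Ici.2 hx.1)).liminf_right_slope_le hr)
    le_rfl (fun x hx => by simpa using bound x hx.1) t ⟨ht, le_rfl⟩
  rwa [gronwallBound_ε0] at this

/-- The left-hand side is the quotient-rule derivative of `A / B` along the flow. -/
theorem rectangle_ratio_deriv_le {a b : ℝ} (hb : 0 < b) (hab : a * b = 1) (hba : b ≤ a) :
    ((-4 / b + 8 / (a + b)) * b - a * (-4 / a + 8 / (a + b))) / b ^ 2 ≤ -4 * (a / b - 1) := by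
  have ha : 0 < a := hb.trans_le hba
  have hb1 : b ^ 2 ≤ 1 := by nlinarith
  have hquot : ((-4 / b + 8 / (a + b)) * b - a * (-4 / a + 8 / (a + b))) / b ^ 2
      = -8 * (a - b) / ((a + b) * b ^ 2) := by
    field_simp
    ring
  rw [hquot, div_le_iff₀ (by positivity)]
  field_simp
  nlinarith [mul_nonneg (sub_nonneg.2 hba) (sub_nonneg.2 hb1)]

theorem tendsto_one_of_mul_eq_one_of_div_tendsto_one {α : Type*} {l : Filter α} {f g : α → ℝ}
    (hpos : ∀ᶠ x in l, 0 < f x) (hmul : ∀ᶠ x in l, f x * g x = 1)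
    (hdiv : Tendsto (fun x => f x / g x) l (𝓝 1)) :
    Tendsto f l (𝓝 1) ∧ Tendsto g l (𝓝 1) := by
  have hf : Tendsto f l (𝓝 1) := by
    have hsqrt : Tendsto (fun x => √(f x / g x)) l (𝓝 1) := by
      simpa using hdiv.sqrt
    refine hsqrt.congr' ?_
    filter_upwards [hpos, hmul] with x hx hxy
    rw [eq_inv_of_mul_eq_one_right hxy, div_inv_eq_mul, ← sq, sqrt_sq hx.le]
  refine ⟨hf, ?_⟩
  refine (by simpa using hf.inv₀ one_ne_zero : Tendsto (fun x => (f x)⁻¹) l (𝓝 1)).congr' ?_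
  filter_upwards [hmul] with x hxy
  exact (eq_inv_of_mul_eq_one_right hxy).symm

theorem statement10 (A B : ℝ → ℝ)
    (hpos : ∀ t ∈ Set.Ici (0 : ℝ), 0 < A t ∧ 0 < B t)
    (hode : ∀ t ∈ Set.Ici (0 : ℝ),
      HasDerivWithinAt A (-4 / B t + 8 / (A t + B t)) (Set.Ici 0) t ∧
      HasDerivWithinAt B (-4 / A t + 8 / (A t + B t)) (Set.Ici 0) t)
    (harea : ∀ t ∈ Set.Ici (0 : ℝ), A t * B t = 1)
    (hord : ∀ t ∈ Set.Ici (0 : ℝ), B t ≤ A t) :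
    (∀ t ∈ Set.Ici (0 : ℝ),
      A t / B t - 1 ≤ (A 0 / B 0 - 1) * Real.exp (-4 * t)) ∧
    Tendsto A atTop (nhds 1) ∧ Tendsto B atTop (nhds 1) := by
  have hdecay : ∀ t ∈ Ici (0 : ℝ), A t / B t - 1 ≤ (A 0 / B 0 - 1) * exp (-4 * t) := by
    intro t ht
    simpa using le_mul_exp_of_hasDerivWithinAt_le_mul
      (fun s hs => ((hode s hs).1.div (hode s hs).2 (hpos s hs).2.ne').sub_const 1)
      (fun s hs => rectangle_ratio_deriv_le (hpos s hs).2 (harea s hs) (hord s hs)) ht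
  have hratio : Tendsto (fun t => A t / B t) atTop (𝓝 1) := by
    have hbound : Tendsto (fun t => 1 + (A 0 / B 0 - 1) * exp (-4 * t)) atTop (𝓝 1) := by
      simpa using ((tendsto_exp_atBot.comp (tendsto_id.const_mul_atTop_of_neg
        (by norm_num : (-4 : ℝ) < 0))).const_mul (A 0 / B 0 - 1)).const_add 1
    refine tendsto_of_tendsto_of_tendsto_of_le_of_le' tendsto_const_nhds hbound ?_ ?_
    · filter_upwards [eventually_ge_atTop 0] with t ht
      exact (one_le_div (hpos t ht).2).2 (hord t ht)
    · filter_upwards [eventually_ge_atTop 0] with t ht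
      linarith [hdecay t ht]
  exact ⟨hdecay, tendsto_one_of_mul_eq_one_of_div_tendsto_one
    (eventually_ge_atTop 0 |>.mono fun t ht => (hpos t ht).1)
    (eventually_ge_atTop 0 |>.mono harea) hratio⟩
end

section
/- Let α, Λ, C > 0 and a₀ > b₀ > 0 with a₀ b₀ = 1 and a₀ + b₀ < Λ. Suppose that for each ε ∈ (0,1) there are sequences (a_ε(k))_k, (b_ε(k))_k, (c_ε(k))_k of reals satisfying: a_ε(k) b_ε(k) + ε c_ε(k) = 1 and 0 ≤ c_ε(k) ≤ Λ for all k; a_ε(k+1) + b_ε(k+1) ≤ a_ε(k) + b_ε(k) ≤ Λ; |a_ε(k+1) − a_ε(k)| ≤ C ε and |b_ε(k+1) − b_ε(k)| ≤ C ε for all k; a_ε(k), b_ε(k) > 0; and a_ε(0) → a₀, b_ε(0) → b₀ as ε → 0. Define a^ε(t) := a_ε(⌊t/(αε)⌋) and b^ε(t) := b_ε(⌊t/(αε)⌋) for t ≥ 0. Then there exist a sequence ε_j → 0 and Lipschitz functions a, b : [0, ∞) → (0, ∞) with a(t) b(t) = 1 for all t ≥ 0 such that a^{ε_j} → a and b^{ε_j}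 → b locally uniformly on [0, ∞). -/
/-!
The sampled profiles `t ↦ (a_ε, b_ε)(⌊t/(αε)⌋)` take values in `[0, Λ]²` and are
`C/α`-Lipschitz up to an additive error `Cε`. A diagonal argument makes a subsequence converge
on a countable dense subset of `[0, ∞)`, and the approximate Lipschitz bound upgrades this to
locally uniform convergence on `[0, ∞)` to a `C/α`-Lipschitz limit. Since
`a_ε b_ε = 1 - ε c_ε` with `c_ε` bounded, the limit satisfies `a b = 1`, which also forces
`a, b > 0`.
-/

open Set Filter Topology

section StepFunctions

variable {Y : Type*} [PseudoMetricSpace Y] {u : ℕ → Y} {c : ℝ}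

theorem dist_le_mul_abs_sub_of_dist_succ_le (hu : ∀ k, dist (u (k + 1)) (u k) ≤ c)
    (m n : ℕ) : dist (u m) (u n) ≤ c * |(m : ℝ) - n| := by
  wlog hmn : m ≤ n generalizing m n
  · rw [dist_comm, abs_sub_comm]
    exact this n m (le_of_not_ge hmn)
  calc dist (u m) (u n) ≤ ∑ i ∈ Finset.Ico m n, dist (u i) (u (i + 1)) :=
        dist_le_Ico_sum_dist u hmn
    _ ≤ ∑ _ ∈ Finset.Ico m n, c :=
        Finset.sum_le_sum fun i _ => (dist_comm _ _).trans_le (hu i)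
    _ = c * |(m : ℝ) - n| := by
        rw [Finset.sum_const, Nat.card_Ico, nsmul_eq_mul, Nat.cast_sub hmn,
          abs_sub_comm, abs_of_nonneg (by simpa using hmn), mul_comm]

theorem abs_natFloor_sub_natFloor_le {x y : ℝ} (hx : 0 ≤ x) (hy : 0 ≤ y) :
    |(⌊x⌋₊ : ℝ) - ⌊y⌋₊| ≤ |x - y| + 1 := by
  have := Nat.floor_le hx
  have := Nat.floor_le hy
  have := Nat.lt_floor_add_one x
  have := Nat.lt_floor_add_one y
  rw [abs_sub_le_iff]
  constructor <;> linarith [le_abs_self (x - y), neg_abs_le (x - y)]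

theorem dist_natFloor_div_le (hu : ∀ k, dist (u (k + 1)) (u k) ≤ c) {h : ℝ} (hh : 0 < h)
    {t s : ℝ} (ht : 0 ≤ t) (hs : 0 ≤ s) :
    dist (u ⌊t / h⌋₊) (u ⌊s / h⌋₊) ≤ c / h * dist t s + c := by
  have hc : 0 ≤ c := dist_nonneg.trans (hu 0)
  calc dist (u ⌊t / h⌋₊) (u ⌊s / h⌋₊) ≤ c * |(⌊t / h⌋₊ : ℝ) - ⌊s / h⌋₊| :=
        dist_le_mul_abs_sub_of_dist_succ_le hu _ _
    _ ≤ c * (|t / h - s / h| + 1) := by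
        gcongr
        exact abs_natFloor_sub_natFloor_le (by positivity) (by positivity)
    _ = c / h * dist t s + c := by
        rw [← sub_div, abs_div, abs_of_pos hh, Real.dist_eq]
        ring

end StepFunctions

section AsymptoticallyLipschitz

variable {X Y : Type*} [PseudoMetricSpace X] [PseudoMetricSpace Y]
  {F : ℕ → X → Y} {S : Set X} {L : NNReal} {δ : ℕ → ℝ}

theorem eventually_mul_dist_lt (x : X) (a : ℝ) {η : ℝ} (hη : 0 < η) :
    ∀ᶠ y in 𝓝 x, a * dist y x < η := by
  have : Tendsto (fun y => a * dist y x) (𝓝 x) (𝓝 (a * dist x x)) :=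
    tendsto_const_nhds.mul (tendsto_id.dist tendsto_const_nhds)
  rw [dist_self, mul_zero] at this
  exact this.eventually_lt_const hη

theorem LipschitzOnWith.of_tendsto_of_dist_le (hδ : Tendsto δ atTop (𝓝 0))
    (hF : ∀ j, ∀ x ∈ S, ∀ y ∈ S, dist (F j x) (F j y) ≤ L * dist x y + δ j) {f : X → Y}
    (hf : ∀ x ∈ S, Tendsto (fun j => F j x) atTop (𝓝 (f x))) :
    LipschitzOnWith L f S := by
  refine LipschitzOnWith.of_dist_le_mul fun x hx y hy => ?_
  have hbound : Tendsto (fun j => L * dist x y + δ j) atTop (𝓝 (L * dist x y)) := by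
    simpa using tendsto_const_nhds.add hδ
  exact le_of_tendsto_of_tendsto' ((hf x hx).dist (hf y hy)) hbound fun j => hF j x hx y hy

theorem TendstoLocallyUniformlyOn.of_tendsto_of_dist_le (hδ : Tendsto δ atTop (𝓝 0))
    (hF : ∀ j, ∀ x ∈ S, ∀ y ∈ S, dist (F j x) (F j y) ≤ L * dist x y + δ j) {f : X → Y}
    (hf : ∀ x ∈ S, Tendsto (fun j => F j x) atTop (𝓝 (f x))) :
    TendstoLocallyUniformlyOn F f atTop S := by
  have hfL := LipschitzOnWith.of_tendsto_of_dist_le hδ hF hf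
  rw [Metric.tendstoLocallyUniformlyOn_iff]
  intro η hη x hx
  have hx_err : Tendsto (fun j => δ j + dist (F j x) (f x)) atTop (𝓝 0) := by
    simpa using hδ.add (tendsto_iff_dist_tendsto_zero.1 (hf x hx))
  refine ⟨S ∩ {y | 2 * L * dist y x < η / 2},
    inter_mem_nhdsWithin S (eventually_mul_dist_lt x _ (half_pos hη)), ?_⟩
  filter_upwards [hx_err.eventually_lt_const (half_pos hη)] with j hj y ⟨hy, hyx⟩
  have h1 := hfL.dist_le_mul y hy x hx
  have h2 := hF j x hx y hy
  rw [dist_comm x y] at h2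
  rw [mem_ofPred_eq] at hyx
  calc dist (f y) (F j y)
      ≤ dist (f y) (f x) + dist (f x) (F j x) + dist (F j x) (F j y) :=
        dist_triangle4 _ _ _ _
    _ < η := by rw [dist_comm (f x)]; linarith

theorem CauchySeq.of_dense_of_dist_le (hδ : Tendsto δ atTop (𝓝 0))
    (hF : ∀ j, ∀ x ∈ S, ∀ y ∈ S, dist (F j x) (F j y) ≤ L * dist x y + δ j)
    {D : Set X} (hDS : D ⊆ S) (hSD : S ⊆ closure D)
    (hD : ∀ d ∈ D, CauchySeq fun j => F j d) {x : X} (hx : x ∈ S) :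
    CauchySeq fun j => F j x := by
  rw [Metric.cauchySeq_iff]
  intro η hη
  obtain ⟨d, hLd, hd⟩ := mem_closure_iff_nhds.1 (hSD hx) _
    (eventually_mul_dist_lt x L (by positivity : 0 < η / 4))
  rw [mem_ofPred_eq, dist_comm] at hLd
  obtain ⟨N₁, hN₁⟩ := Metric.cauchySeq_iff.1 (hD d hd) (η / 4) (by positivity)
  obtain ⟨N₂, hN₂⟩ := eventually_atTop.1 (hδ.eventually_lt_const (by positivity : 0 < η / 8))
  refine ⟨max N₁ N₂, fun m hm n hn => ?_⟩
  have hFm := hF m x hx d (hDS hd)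
  have hFn := hF n d (hDS hd) x hx
  rw [dist_comm d x] at hFn
  have hmn := hN₁ m (le_of_max_le_left hm) n (le_of_max_le_left hn)
  have hδm := hN₂ m (le_of_max_le_right hm)
  have hδn := hN₂ n (le_of_max_le_right hn)
  calc dist (F m x) (F n x)
      ≤ dist (F m x) (F m d) + dist (F m d) (F n d) + dist (F n d) (F n x) :=
        dist_triangle4 _ _ _ _
    _ < η := by linarith

theorem exists_strictMono_forall_tendsto_of_mem_isCompact {Z : Type*} {G : ℕ → Z → Y}
    {D : Set Z} (hD : D.Countable) {K : Set Y} (hK : IsCompact K)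
    (hGK : ∀ j, ∀ z ∈ D, G j z ∈ K) :
    ∃ φ : ℕ → ℕ, StrictMono φ ∧
      ∀ z ∈ D, ∃ y ∈ K, Tendsto (fun j => G (φ j) z) atTop (𝓝 y) := by
  have := hD.to_subtype
  obtain ⟨g, hg, φ, hφ, hlim⟩ := (isCompact_univ_pi fun _ : D => hK).tendsto_subseq
    (x := fun j (z : D) => G j z) fun j z _ => hGK j z z.2
  exact ⟨φ, hφ, fun z hz => ⟨g ⟨z, hz⟩, hg ⟨z, hz⟩ trivial, tendsto_pi_nhds.1 hlim ⟨z, hz⟩⟩⟩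

/-- Arzelà–Ascoli for functions that are only Lipschitz up to a vanishing additive error,
so possibly discontinuous, like the step functions of the theorem. -/
theorem exists_strictMono_tendstoLocallyUniformlyOn_of_dist_le [Nonempty Y]
    (hS : TopologicalSpace.IsSeparable S) {K : Set Y} (hK : IsCompact K)
    (hFK : ∀ j, ∀ x ∈ S, F j x ∈ K) (hδ : Tendsto δ atTop (𝓝 0))
    (hF : ∀ j, ∀ x ∈ S, ∀ y ∈ S, dist (F j x) (F j y) ≤ L * dist x y + δ j) :
    ∃ φ : ℕ → ℕ, StrictMono φ ∧ ∃ f : X → Y, (∀ x ∈ S, f x ∈ K) ∧ LipschitzOnWith L f S ∧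
      TendstoLocallyUniformlyOn (fun j => F (φ j)) f atTop S := by
  obtain ⟨D, hDS, hD, hSD⟩ := hS.exists_countable_dense_subset
  obtain ⟨φ, hφ, hlimD⟩ := exists_strictMono_forall_tendsto_of_mem_isCompact hD hK
    fun j d hd => hFK j d (hDS hd)
  have hδφ : Tendsto (δ ∘ φ) atTop (𝓝 0) := hδ.comp hφ.tendsto_atTop
  have hFφ : ∀ j, ∀ x ∈ S, ∀ y ∈ S,
      dist (F (φ j) x) (F (φ j) y) ≤ L * dist x y + δ (φ j) := fun j => hF (φ j)
  have hlim : ∀ x, ∃ y, x ∈ S → y ∈ K ∧ Tendsto (fun j => F (φ j) x) atTop (𝓝 y) := by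
    intro x
    by_cases hx : x ∈ S
    · have hcauchy := CauchySeq.of_dense_of_dist_le hδφ hFφ hDS hSD
        (fun d hd => (hlimD d hd).elim fun _ h => h.2.cauchySeq) hx
      obtain ⟨y, hyK, hy⟩ := cauchySeq_tendsto_of_isComplete hK.isComplete
        (fun j => hFK (φ j) x hx) hcauchy
      exact ⟨y, fun _ => ⟨hyK, hy⟩⟩
    · exact ⟨Classical.arbitrary Y, fun h => absurd h hx⟩
  choose f hf using hlim
  have hf' : ∀ x ∈ S, Tendsto (fun j => F (φ j) x) atTop (𝓝 (f x)) :=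
    fun x hx => (hf x hx).2
  exact ⟨φ, hφ, f, fun x hx => (hf x hx).1, .of_tendsto_of_dist_le hδφ hFφ hf',
    .of_tendsto_of_dist_le hδφ hFφ hf'⟩

end AsymptoticallyLipschitz

theorem mul_eq_one_of_tendsto_of_add_mul_eq_one {u v ε c : ℕ → ℝ} {a b M : ℝ}
    (huv : ∀ j, u j * v j + ε j * c j = 1) (hε : Tendsto ε atTop (𝓝 0))
    (hc : ∀ j, |c j| ≤ M) (hu : Tendsto u atTop (𝓝 a)) (hv : Tendsto v atTop (𝓝 b)) :
    a * b = 1 := by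
  have herr : Tendsto (fun j => ε j * c j) atTop (𝓝 0) :=
    hε.zero_mul_isBoundedUnder_le (isBoundedUnder_of ⟨M, hc⟩)
  have hone : Tendsto (fun j => u j * v j) atTop (𝓝 1) := by
    have huv' : (fun j => u j * v j) = fun j => 1 - ε j * c j :=
      funext fun j => eq_sub_of_add_eq (huv j)
    simpa [huv'] using tendsto_const_nhds.sub herr
  exact tendsto_nhds_unique (hu.mul hv) hone

/-- The pair `(a^ε(t), b^ε(t))` of side lengths at time `t`, the `k`-th discrete step
being taken at time `k α ε`. -/
noncomputable def sampledSides (A B : ℝ → ℕ → ℝ) (α ε t : ℝ) : ℝ × ℝ :=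
  (A ε ⌊t / (α * ε)⌋₊, B ε ⌊t / (α * ε)⌋₊)

theorem dist_sampledSides_le {A B : ℝ → ℕ → ℝ} {α C ε : ℝ} (hα : 0 < α) (hε : 0 < ε)
    (hA : ∀ k, |A ε (k + 1) - A ε k| ≤ C * ε) (hB : ∀ k, |B ε (k + 1) - B ε k| ≤ C * ε)
    {t s : ℝ} (ht : 0 ≤ t) (hs : 0 ≤ s) :
    dist (sampledSides A B α ε t) (sampledSides A B α ε s) ≤
      (C / α).toNNReal * dist t s + C * ε := by
  have hstep : ∀ k, dist (A ε (k + 1), B ε (k + 1)) (A ε k, B ε k) ≤ C * ε := fun k => by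
    rw [Prod.dist_eq, Real.dist_eq, Real.dist_eq]
    exact max_le (hA k) (hB k)
  calc dist (sampledSides A B α ε t) (sampledSides A B α ε s)
      ≤ C * ε / (α * ε) * dist t s + C * ε :=
        dist_natFloor_div_le (u := fun k => (A ε k, B ε k)) hstep (mul_pos hα hε) ht hs
    _ ≤ (C / α).toNNReal * dist t s + C * ε := by
        rw [mul_div_mul_right C α hε.ne']
        gcongr
        exact Real.le_coe_toNNReal _

theorem statement15_general (α Λ C : ℝ) (hα : 0 < α)
    (A B Cs : ℝ → ℕ → ℝ)
    (hpos : ∀ ε ∈ Set.Ioo (0 : ℝ) 1, ∀ k, 0 < A ε k ∧ 0 < B ε k)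
    (harea : ∀ ε ∈ Set.Ioo (0 : ℝ) 1, ∀ k, A ε k * B ε k + ε * Cs ε k = 1)
    (hcs : ∀ ε ∈ Set.Ioo (0 : ℝ) 1, ∀ k, 0 ≤ Cs ε k ∧ Cs ε k ≤ Λ)
    (hmono : ∀ ε ∈ Set.Ioo (0 : ℝ) 1, ∀ k,
      A ε (k + 1) + B ε (k + 1) ≤ A ε k + B ε k ∧ A ε k + B ε k ≤ Λ)
    (hlipA : ∀ ε ∈ Set.Ioo (0 : ℝ) 1, ∀ k, |A ε (k + 1) - A ε k| ≤ C * ε)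
    (hlipB : ∀ ε ∈ Set.Ioo (0 : ℝ) 1, ∀ k, |B ε (k + 1) - B ε k| ≤ C * ε) :
    ∃ (εj : ℕ → ℝ) (fa fb : ℝ → ℝ) (K : NNReal),
      (∀ j, εj j ∈ Set.Ioo (0 : ℝ) 1) ∧
      Tendsto εj atTop (nhds 0) ∧
      LipschitzOnWith K fa (Set.Ici 0) ∧ LipschitzOnWith K fb (Set.Ici 0) ∧
      (∀ t ∈ Set.Ici (0 : ℝ), 0 < fa t ∧ 0 < fb t ∧ fa t * fb t = 1) ∧
      TendstoLocallyUniformlyOn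
        (fun j t => A (εj j) ⌊t / (α * εj j)⌋₊) fa atTop (Set.Ici 0) ∧
      TendstoLocallyUniformlyOn
        (fun j t => B (εj j) ⌊t / (α * εj j)⌋₊) fb atTop (Set.Ici 0) := by
  obtain ⟨e, -, he, he0⟩ := exists_seq_strictAnti_tendsto' (zero_lt_one' ℝ)
  have hbound : ∀ j t, sampledSides A B α (e j) t ∈ Icc 0 Λ ×ˢ Icc 0 Λ := fun j t => by
    have := hpos (e j) (he j) ⌊t / (α * e j)⌋₊
    have := (hmono (e j) (he j) ⌊t / (α * e j)⌋₊).2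
    refine ⟨⟨?_, ?_⟩, ?_, ?_⟩ <;> dsimp only [sampledSides] <;> linarith
  obtain ⟨φ, hφ, f, hfK, hfL, hconv⟩ := exists_strictMono_tendstoLocallyUniformlyOn_of_dist_le
    (.of_separableSpace (Ici 0)) (isCompact_Icc.prod isCompact_Icc) (fun j t _ => hbound j t)
    (by simpa using he0.const_mul C) fun j t ht s hs =>
      dist_sampledSides_le hα (he j).1 (hlipA _ (he j)) (hlipB _ (he j)) ht hs
  have hprod : ∀ t ∈ Ici (0 : ℝ), (f t).1 * (f t).2 = 1 := by
    intro t ht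
    have hlim := hconv.tendsto_at ht
    refine mul_eq_one_of_tendsto_of_add_mul_eq_one (M := Λ) (fun j => harea _ (he (φ j)) _)
      (he0.comp hφ.tendsto_atTop) (fun j => ?_) hlim.fst_nhds hlim.snd_nhds
    obtain ⟨hc₀, hcΛ⟩ := hcs _ (he (φ j)) ⌊t / (α * e (φ j))⌋₊
    exact (abs_of_nonneg hc₀).trans_le hcΛ
  refine ⟨e ∘ φ, fun t => (f t).1, fun t => (f t).2, 1 * (C / α).toNNReal,
    fun j => he (φ j), he0.comp hφ.tendsto_atTop,
    LipschitzWith.prod_fst.comp_lipschitzOnWith hfL,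
    LipschitzWith.prod_snd.comp_lipschitzOnWith hfL, fun t ht => ?_,
    uniformContinuous_fst.comp_tendstoLocallyUniformlyOn hconv,
    uniformContinuous_snd.comp_tendstoLocallyUniformlyOn hconv⟩
  obtain ⟨⟨ha, -⟩, hb, -⟩ := hfK t ht
  have h1 := hprod t ht
  refine ⟨ha.lt_of_ne ?_, hb.lt_of_ne ?_, h1⟩ <;> rintro h <;> simp [← h] at h1

theorem statement15 (α Λ C a₀ b₀ : ℝ) (hα : 0 < α) (hΛ : 0 < Λ) (hC : 0 < C)
    (hb : 0 < b₀) (hba : b₀ < a₀) (hab : a₀ * b₀ = 1) (hsum : a₀ + b₀ < Λ)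
    (A B Cs : ℝ → ℕ → ℝ)
    (hpos : ∀ ε ∈ Set.Ioo (0 : ℝ) 1, ∀ k, 0 < A ε k ∧ 0 < B ε k)
    (harea : ∀ ε ∈ Set.Ioo (0 : ℝ) 1, ∀ k, A ε k * B ε k + ε * Cs ε k = 1)
    (hcs : ∀ ε ∈ Set.Ioo (0 : ℝ) 1, ∀ k, 0 ≤ Cs ε k ∧ Cs ε k ≤ Λ)
    (hmono : ∀ ε ∈ Set.Ioo (0 : ℝ) 1, ∀ k,
      A ε (k + 1) + B ε (k + 1) ≤ A ε k + B ε k ∧ A ε k + B ε k ≤ Λ)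
    (hlipA : ∀ ε ∈ Set.Ioo (0 : ℝ) 1, ∀ k, |A ε (k + 1) - A ε k| ≤ C * ε)
    (hlipB : ∀ ε ∈ Set.Ioo (0 : ℝ) 1, ∀ k, |B ε (k + 1) - B ε k| ≤ C * ε)
    (hinitA : Tendsto (fun ε => A ε 0) (nhdsWithin 0 (Set.Ioo 0 1)) (nhds a₀))
    (hinitB : Tendsto (fun ε => B ε 0) (nhdsWithin 0 (Set.Ioo 0 1)) (nhds b₀)) :
    ∃ (εj : ℕ → ℝ) (fa fb : ℝ → ℝ) (K : NNReal),
      (∀ j, εj j ∈ Set.Ioo (0 : ℝ) 1) ∧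
      Tendsto εj atTop (nhds 0) ∧
      LipschitzOnWith K fa (Set.Ici 0) ∧ LipschitzOnWith K fb (Set.Ici 0) ∧
      (∀ t ∈ Set.Ici (0 : ℝ), 0 < fa t ∧ 0 < fb t ∧ fa t * fb t = 1) ∧
      TendstoLocallyUniformlyOn
        (fun j t => A (εj j) ⌊t / (α * εj j)⌋₊) fa atTop (Set.Ici 0) ∧
      TendstoLocallyUniformlyOn
        (fun j t => B (εj j) ⌊t / (α * εj j)⌋₊) fb atTop (Set.Ici 0) :=
  statement15_general α Λ C hα A B Cs hpos harea hcs hmono hlipA hlipB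
end

section
/- Let α > 0 and a₀ > b₀ > 0 with a₀ b₀ = 1. For each ε > 0 let (a_ε(k))_k, (b_ε(k))_k be positive sequences defined by a_ε(k+1) = a_ε(k) − 2ε X_ε(k) and b_ε(k+1) = b_ε(k) + 2ε Y_ε(k), where X_ε(k) ∈ { ⌊x_ε(k)⌋, ⌈x_ε(k)⌉ } with x_ε(k) := 2α(a_ε(k) − b_ε(k))/(b_ε(k)(a_ε(k) + b_ε(k))) − a_ε(k)/(a_ε(k) + b_ε(k)), and Y_ε(k) := ⌊ 2 b_ε(k) X_ε(k) / (2 a_ε(k) − 4ε X_ε(k)) ⌋. Suppose the interpolations a^ε(t) := a_ε(⌊t/(αε)⌋), b^ε(t) := b_ε(⌊t/(αε)⌋) converge locally uniformly on [0, ∞), as ε → 0, to Lipschitz functions a, b : [0, ∞) → (0, ∞) with a(t) b(t) = 1 and b(t) ≤ a(t) for all t. Then for almost every t ≥ 0, setting x(t) := 2α/b(t) − (4α + a(t))/(a(t) + b(t)): if x(t) is not a natural number, then da/dt(t) ∈ [ −(2/α)⌈x(t)⌉, −(2/α)⌊x(t)⌋ ] and db/dt(t) ∈ [ (2b(t)/(α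 a(t)))⌊x(t)⌋, (2b(t)/(α a(t)))⌈x(t)⌉ ]; if x(t) is a natural number, then da/dt(t) ∈ [ −(2/α)(x(t)+1), −(2/α)(x(t)−1) ] and db/dt(t) ∈ [ (2b(t)/(α a(t)))(x(t)−1), (2b(t)/(α a(t)))(x(t)+1) ]. -/
open Set Filter MeasureTheory Topology

/-!
Fix `t > 0` where `a` is differentiable (Rademacher) and put `x = x(t)`. By locally uniform
convergence and continuity, `x_ε(k)` is close to `x` for all small `ε` and all steps `k` with
`αεk` near `t`, so the integer `X_ε(k)`, its floor or ceiling, lies in `[⌈x⌉ - 1, ⌊x⌋ + 1]`.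
Summing `a_ε(k) - a_ε(k+1) = 2εX_ε(k)` over the `≈ h/(αε)` steps between `t` and `t + h` and letting
`ε → 0` puts `(a(t+h) - a(t))/h` in `-(2/α)[⌈x⌉ - 1, ⌊x⌋ + 1]`, hence also `a'(t)`. This interval
is `-(2/α)[⌊x⌋, ⌈x⌉]` if `x ∉ ℤ` and `-(2/α)[x - 1, x + 1]` if `x ∈ ℤ`, where `x > -1` because
`b ≤ a`. Since `b = 1/a`, `b' = -a'/a² = -(b/a) a'`.
-/

theorem TendstoUniformlyOnFilter.tendsto_prod {ι α β : Type*} [UniformSpace β]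
    {F : ι → α → β} {f : α → β} {p : Filter ι} {p' : Filter α} {y : β}
    (h : TendstoUniformlyOnFilter F f p p') (hf : Tendsto f p' (𝓝 y)) :
    Tendsto (fun q : ι × α => F q.1 q.2) (p ×ˢ p') (𝓝 y) :=
  (hf.comp tendsto_snd).congr_uniformity h

theorem TendstoLocallyUniformlyOn.tendsto_prod_nhds {ι α β : Type*} [TopologicalSpace α]
    [UniformSpace β] {F : ι → α → β} {f : α → β} {p : Filter ι} {s : Set α} {x : α}
    (h : TendstoLocallyUniformlyOn F f p s) (hs : s ∈ 𝓝 x) (hf : ContinuousAt f x) :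
    Tendsto (fun q : ι × α => F q.1 q.2) (p ×ˢ 𝓝 x) (𝓝 (f x)) := by
  have h' := tendstoLocallyUniformlyOn_iff_filter.1 h x (mem_of_mem_nhds hs)
  rw [nhdsWithin_eq_nhds.2 hs] at h'
  exact h'.tendsto_prod hf

theorem HasDerivAt.mem_Icc_of_eventually_sub_mem_Icc {f : ℝ → ℝ} {f' x lo hi : ℝ}
    (hf : HasDerivAt f f' x) (h : ∀ᶠ h in 𝓝[>] 0, f (x + h) - f x ∈ Icc (lo * h) (hi * h)) :
    f' ∈ Icc lo hi := by
  refine isClosed_Icc.mem_of_tendsto hf.tendsto_slope_zero_right ?_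
  filter_upwards [h, self_mem_nhdsWithin] with h ⟨hlo, hhi⟩ (hpos : 0 < h)
  rw [smul_eq_mul, mem_Icc, le_inv_mul_iff₀ hpos, inv_mul_le_iff₀ hpos]
  constructor <;> linarith

theorem sub_mem_Icc_of_forall_sub_succ_mem_Icc {A : ℕ → ℝ} {lo hi : ℝ} {m n : ℕ} (hmn : m ≤ n)
    (hstep : ∀ k, m ≤ k → k < n → A k - A (k + 1) ∈ Icc lo hi) :
    A m - A n ∈ Icc ((n - m : ℝ) * lo) ((n - m : ℝ) * hi) := by
  induction n, hmn using Nat.le_induction with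
  | base => simp
  | succ n hmn ih =>
    obtain ⟨hlo, hhi⟩ := ih fun k hk hkn => hstep k hk (by omega)
    obtain ⟨hlo', hhi'⟩ := hstep n hmn (by omega)
    push_cast
    constructor <;> linarith

theorem tendsto_mul_natFloor_div {x : ℝ} (hx : 0 ≤ x) :
    Tendsto (fun δ : ℝ => δ * ⌊x / δ⌋₊) (𝓝[>] 0) (𝓝 x) := by
  have hlow : Tendsto (fun δ : ℝ => x - δ) (𝓝[>] 0) (𝓝 x) := by
    simpa using ((tendsto_const_nhds (x := x)).sub tendsto_id).mono_left
      (nhdsWithin_le_nhds (a := (0 : ℝ)) (s := Ioi 0))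
  refine tendsto_of_tendsto_of_tendsto_of_le_of_le' hlow tendsto_const_nhds ?_ ?_ <;>
    filter_upwards [self_mem_nhdsWithin] with δ (hδ : 0 < δ)
  · calc x - δ = δ * (x / δ - 1) := by field_simp
      _ ≤ δ * ⌊x / δ⌋₊ := by gcongr; exact (Nat.sub_one_lt_floor _).le
  · calc δ * ⌊x / δ⌋₊ ≤ δ * (x / δ) := by gcongr; exact Nat.floor_le (by positivity)
      _ = x := by field_simp

theorem sub_lt_mul_and_mul_lt_of_floor_le_of_lt_floor {δ t s : ℝ} {k : ℕ} (hδ : 0 < δ)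
    (hk₁ : ⌊t / δ⌋₊ ≤ k) (hk₂ : k < ⌊s / δ⌋₊) : t - δ < δ * k ∧ δ * k < s := by
  have h₁ : t / δ < k + 1 :=
    (Nat.lt_floor_add_one _).trans_le (by exact_mod_cast Nat.succ_le_succ hk₁)
  have h₂ : (k : ℝ) < s / δ := Nat.lt_of_lt_floor hk₂
  rw [div_lt_iff₀ hδ] at h₁
  rw [lt_div_iff₀ hδ] at h₂
  constructor <;> linarith

theorem sub_mem_Icc_of_forall_velocity_mem_Icc {α t h c C : ℝ} {A X : ℝ → ℕ → ℝ} {a : ℝ → ℝ}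
    (hα : 0 < α) (ht : 0 ≤ t) (hh : 0 ≤ h)
    (hrec : ∀ ε > (0 : ℝ), ∀ k, A ε (k + 1) = A ε k - 2 * ε * X ε k)
    (hconv_t : Tendsto (fun ε => A ε ⌊t / (α * ε)⌋₊) (𝓝[>] 0) (𝓝 (a t)))
    (hconv_th : Tendsto (fun ε => A ε ⌊(t + h) / (α * ε)⌋₊) (𝓝[>] 0) (𝓝 (a (t + h))))
    (hX : ∀ᶠ ε in 𝓝[>] 0, ∀ k, ⌊t / (α * ε)⌋₊ ≤ k → k < ⌊(t + h) / (α * ε)⌋₊ →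
      X ε k ∈ Icc c C) :
    a (t + h) - a t ∈ Icc (-(2 * h / α) * C) (-(2 * h / α) * c) := by
  set m : ℝ → ℕ := fun ε => ⌊t / (α * ε)⌋₊
  set n : ℝ → ℕ := fun ε => ⌊(t + h) / (α * ε)⌋₊
  have hscale : Tendsto (α * ·) (𝓝[>] (0 : ℝ)) (𝓝[>] 0) := by
    simpa only [comap_mulLeft_nhdsGT_zero hα] using tendsto_comap (f := (α * ·)) (x := 𝓝[>] 0)
  have hsteps : Tendsto (fun ε => 2 * ε * ((n ε : ℝ) - m ε)) (𝓝[>] 0) (𝓝 (2 * h / α)) := by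
    have hlim := (((tendsto_mul_natFloor_div (by linarith : 0 ≤ t + h)).sub
      (tendsto_mul_natFloor_div ht)).comp hscale).const_mul (2 / α)
    convert hlim using 1
    · ext ε
      simp only [Function.comp_apply, n, m]
      field_simp
    · congr 1; ring
  have hdiff : ∀ᶠ ε in 𝓝[>] 0, A ε (n ε) - A ε (m ε) ∈
      Icc (-(2 * ε * (n ε - m ε)) * C) (-(2 * ε * (n ε - m ε)) * c) := by
    filter_upwards [hX, self_mem_nhdsWithin] with ε hXε (hε : 0 < ε)
    have hmn : m ε ≤ n ε := Nat.floor_le_floor (by gcongr; linarith)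
    have hsum := sub_mem_Icc_of_forall_sub_succ_mem_Icc (A := A ε) (lo := 2 * ε * c)
      (hi := 2 * ε * C) hmn fun k hk hkn => by
        rw [hrec ε hε k, sub_sub_cancel]
        obtain ⟨hc, hC⟩ := hXε k hk hkn
        exact ⟨by gcongr, by gcongr⟩
    constructor <;> linarith [hsum.1, hsum.2]
  exact ⟨le_of_tendsto_of_tendsto (hsteps.neg.mul_const C) (hconv_th.sub hconv_t)
      (hdiff.mono fun _ h => h.1),
    le_of_tendsto_of_tendsto (hconv_th.sub hconv_t) (hsteps.neg.mul_const c)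
      (hdiff.mono fun _ h => h.2)⟩

theorem HasDerivAt.mem_Icc_of_eventually_velocity_mem_Icc {α t u c C : ℝ} {A X : ℝ → ℕ → ℝ}
    {a : ℝ → ℝ} (hα : 0 < α) (ht : 0 < t)
    (hrec : ∀ ε > (0 : ℝ), ∀ k, A ε (k + 1) = A ε k - 2 * ε * X ε k)
    (hconv : ∀ s, 0 ≤ s → Tendsto (fun ε => A ε ⌊s / (α * ε)⌋₊) (𝓝[>] 0) (𝓝 (a s)))
    (hda : HasDerivAt a (-(2 / α) * u) t)
    (hX : ∃ η > 0, ∀ᶠ ε in 𝓝[>] 0, ∀ k : ℕ, |α * ε * k - t| < η → X ε k ∈ Icc c C) :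
    u ∈ Icc c C := by
  obtain ⟨η, hη, hXη⟩ := hX
  have hsmall : ∀ᶠ ε in 𝓝[>] (0 : ℝ), α * ε < η / 2 :=
    eventually_nhdsGT_zero_mul_left hα
      (mem_of_superset (Ioo_mem_nhdsGT (half_pos hη)) fun _ h => h.2)
  have hmem : -(2 / α) * u ∈ Icc (-(2 / α) * C) (-(2 / α) * c) := by
    apply hda.mem_Icc_of_eventually_sub_mem_Icc
    filter_upwards [Ioo_mem_nhdsGT (half_pos hη)] with h ⟨hh₀, hhη⟩
    have hXh : ∀ᶠ ε in 𝓝[>] 0, ∀ k, ⌊t / (α * ε)⌋₊ ≤ k → k < ⌊(t + h) / (α * ε)⌋₊ →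
        X ε k ∈ Icc c C := by
      filter_upwards [hXη, hsmall, self_mem_nhdsWithin] with ε hXε hεη (hε : 0 < ε) k hk₁ hk₂
      obtain ⟨hlo, hhi⟩ := sub_lt_mul_and_mul_lt_of_floor_le_of_lt_floor (by positivity) hk₁ hk₂
      exact hXε k (abs_sub_lt_iff.2 ⟨by linarith, by linarith⟩)
    convert sub_mem_Icc_of_forall_velocity_mem_Icc hα ht.le hh₀.le hrec (hconv t ht.le)
      (hconv (t + h) (by linarith)) hXh using 2 <;> ring
  have hneg : -(2 / α) < 0 := neg_neg_of_pos (by positivity)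
  exact ⟨(mul_le_mul_left_of_neg hneg).1 hmem.2, (mul_le_mul_left_of_neg hneg).1 hmem.1⟩

theorem mul_mem_Icc_of_nonneg {R : Type*} [Ring R] [PartialOrder R] [IsOrderedRing R]
    {κ u lo hi : R} (hκ : 0 ≤ κ) (hu : u ∈ Icc lo hi) : κ * u ∈ Icc (κ * lo) (κ * hi) :=
  ⟨mul_le_mul_of_nonneg_left hu.1 hκ, mul_le_mul_of_nonneg_left hu.2 hκ⟩

theorem mul_mem_Icc_of_nonpos {R : Type*} [Ring R] [PartialOrder R] [IsOrderedRing R]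
    {κ u lo hi : R} (hκ : κ ≤ 0) (hu : u ∈ Icc lo hi) : κ * u ∈ Icc (κ * hi) (κ * lo) :=
  ⟨mul_le_mul_of_nonpos_left hu.2 hκ, mul_le_mul_of_nonpos_left hu.1 hκ⟩

theorem Int.cast_floor_mem_Icc_of_mem_Icc {R : Type*} [Ring R] [LinearOrder R]
    [IsStrictOrderedRing R] [FloorRing R] {y : R} {m n : ℤ} (hy : y ∈ Icc (m : R) n) :
    (⌊y⌋ : R) ∈ Icc (m : R) n :=
  ⟨by exact_mod_cast Int.le_floor.2 hy.1, (Int.floor_le y).trans hy.2⟩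

theorem Int.cast_ceil_mem_Icc_of_mem_Icc {R : Type*} [Ring R] [LinearOrder R]
    [IsStrictOrderedRing R] [FloorRing R] {y : R} {m n : ℤ} (hy : y ∈ Icc (m : R) n) :
    (⌈y⌉ : R) ∈ Icc (m : R) n :=
  ⟨hy.1.trans (Int.le_ceil y), by exact_mod_cast Int.ceil_le.2 hy.2⟩

theorem Icc_ceil_sub_one_floor_add_one_mem_nhds {R : Type*} [Ring R] [LinearOrder R]
    [IsStrictOrderedRing R] [FloorRing R] [TopologicalSpace R] [OrderTopology R] (x : R) :
    Icc ((⌈x⌉ - 1 : ℤ) : R) ((⌊x⌋ + 1 : ℤ) : R) ∈ 𝓝 x := by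
  push_cast
  exact Icc_mem_nhds (sub_lt_iff_lt_add.2 (Int.ceil_lt_add_one x)) (Int.lt_floor_add_one x)

theorem mem_Icc_floor_ceil_of_mem_Icc_ceil_sub_one_floor_add_one {x u : ℝ} (hx : -1 < x)
    (hu : u ∈ Icc ((⌈x⌉ : ℝ) - 1) (⌊x⌋ + 1)) :
    ((¬ ∃ n : ℕ, x = n) → u ∈ Icc (⌊x⌋ : ℝ) ⌈x⌉) ∧
      ((∃ n : ℕ, x = n) → u ∈ Icc (x - 1) (x + 1)) := by
  refine ⟨fun hnat => ?_, fun ⟨n, hn⟩ => ?_⟩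
  · have hint : x ∉ range ((↑) : ℤ → ℝ) := by
      rintro ⟨m, rfl⟩
      have hm : 0 ≤ m := by exact_mod_cast (show (-1 : ℝ) < m from hx)
      exact hnat ⟨m.toNat, by exact_mod_cast (Int.toNat_of_nonneg hm).symm⟩
    have hceil := (Int.ceil_eq_floor_add_one_iff_notMem x).2 hint
    rw [hceil] at hu ⊢
    push_cast at hu ⊢
    rwa [add_sub_cancel_right] at hu
  · subst hn
    simpa using hu

/-- `x_ε(k) = flowRate α (a_ε(k)) (b_ε(k))`. -/
noncomputable def flowRate (α p q : ℝ) : ℝ := 2 * α * (p - q) / (q * (p + q)) - p / (p + q)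

theorem flowRate_eq {α p q : ℝ} (hq : q ≠ 0) (hpq : p + q ≠ 0) :
    flowRate α p q = 2 * α / q - (4 * α + p) / (p + q) := by
  unfold flowRate
  field_simp
  ring

theorem neg_one_lt_flowRate {α p q : ℝ} (hα : 0 ≤ α) (hq : 0 < q) (hqp : q ≤ p) :
    -1 < flowRate α p q := by
  have hpq : 0 < p + q := by linarith
  have hsum : flowRate α p q + 1 = (2 * α * (p - q) + q ^ 2) / (q * (p + q)) := by
    unfold flowRate
    field_simp
    ring
  have hpos : 0 < (2 * α * (p - q) + q ^ 2) / (q * (p + q)) :=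
    div_pos (by nlinarith) (by positivity)
  linarith

theorem continuousAt_flowRate {α p q : ℝ} (hq : q ≠ 0) (hpq : p + q ≠ 0) :
    ContinuousAt (fun z : ℝ × ℝ => flowRate α z.1 z.2) (p, q) := by
  unfold flowRate
  fun_prop (disch := simp [hq, hpq])

theorem exists_pos_eventually_velocity_mem_Icc {α t : ℝ} {A B : ℝ → ℕ → ℝ} {X : ℝ → ℕ → ℤ}
    {a b : ℝ → ℝ} (hα : 0 < α) (ht : 0 < t) (hbt : b t ≠ 0) (habt : a t + b t ≠ 0)
    (hX : ∀ ε > (0 : ℝ), ∀ k,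
      X ε k = ⌊flowRate α (A ε k) (B ε k)⌋ ∨ X ε k = ⌈flowRate α (A ε k) (B ε k)⌉)
    (hconvA : TendstoLocallyUniformlyOn (fun ε s => A ε ⌊s / (α * ε)⌋₊) a (𝓝[>] 0) (Ici 0))
    (hconvB : TendstoLocallyUniformlyOn (fun ε s => B ε ⌊s / (α * ε)⌋₊) b (𝓝[>] 0) (Ici 0))
    (ha : ContinuousAt a t) (hb : ContinuousAt b t) :
    ∃ η > 0, ∀ᶠ ε in 𝓝[>] 0, ∀ k : ℕ, |α * ε * k - t| < η →
      (X ε k : ℝ) ∈ Icc ((⌈flowRate α (a t) (b t)⌉ : ℝ) - 1) (⌊flowRate α (a t) (b t)⌋ + 1) := by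
  have hlim := (continuousAt_flowRate (α := α) hbt habt).tendsto.comp
    ((hconvA.tendsto_prod_nhds (Ici_mem_nhds ht) ha).prodMk_nhds
      (hconvB.tendsto_prod_nhds (Ici_mem_nhds ht) hb))
  obtain ⟨P, hP, η, hη, hnear⟩ := Metric.eventually_prod_nhds_iff.1
    (hlim.eventually (Icc_ceil_sub_one_floor_add_one_mem_nhds _))
  refine ⟨η, hη, ?_⟩
  filter_upwards [hP, self_mem_nhdsWithin] with ε hPε (hε : 0 < ε) k hk
  have hrate := hnear hPε (x := α * ε * k) hk
  have hfloor : ⌊α * ε * k / (α * ε)⌋₊ = k := by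
    rw [mul_div_cancel_left₀ _ (by positivity)]
    exact Nat.floor_natCast k
  simp only [Function.comp_apply, hfloor] at hrate
  rcases hX ε hε k with hXk | hXk <;> rw [hXk]
  · simpa using Int.cast_floor_mem_Icc_of_mem_Icc hrate
  · simpa using Int.cast_ceil_mem_Icc_of_mem_Icc hrate

theorem statement16_general (α : ℝ) (hα : 0 < α)
    (A B : ℝ → ℕ → ℝ) (X : ℝ → ℕ → ℤ)
    (hX : ∀ ε > (0 : ℝ), ∀ k,
      X ε k = ⌊2 * α * (A ε k - B ε k) / (B ε k * (A ε k + B ε k)) -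
          A ε k / (A ε k + B ε k)⌋ ∨
      X ε k = ⌈2 * α * (A ε k - B ε k) / (B ε k * (A ε k + B ε k)) -
          A ε k / (A ε k + B ε k)⌉)
    (hrecA : ∀ ε > (0 : ℝ), ∀ k, A ε (k + 1) = A ε k - 2 * ε * (X ε k : ℝ))
    (a b : ℝ → ℝ) (Ka : NNReal)
    (hLa : LipschitzOnWith Ka a (Set.Ici 0))
    (hprops : ∀ t ∈ Set.Ici (0 : ℝ), 0 < b t ∧ b t ≤ a t ∧ a t * b t = 1)
    (hconvA : TendstoLocallyUniformlyOn (fun ε t => A ε ⌊t / (α * ε)⌋₊) a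
      (nhdsWithin 0 (Set.Ioi 0)) (Set.Ici 0))
    (hconvB : TendstoLocallyUniformlyOn (fun ε t => B ε ⌊t / (α * ε)⌋₊) b
      (nhdsWithin 0 (Set.Ioi 0)) (Set.Ici 0)) :
    ∀ᵐ t ∂(volume.restrict (Set.Ici (0 : ℝ))),
      ∃ da db : ℝ, HasDerivAt a da t ∧ HasDerivAt b db t ∧
        ((¬ ∃ nn : ℕ,
            2 * α / b t - (4 * α + a t) / (a t + b t) = (nn : ℝ)) →
          da ∈ Set.Icc
              (-(2 / α) * (⌈2 * α / b t - (4 * α + a t) / (a t + b t)⌉ : ℝ))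
              (-(2 / α) * (⌊2 * α / b t - (4 * α + a t) / (a t + b t)⌋ : ℝ)) ∧
          db ∈ Set.Icc
              ((2 * b t / (α * a t)) *
                (⌊2 * α / b t - (4 * α + a t) / (a t + b t)⌋ : ℝ))
              ((2 * b t / (α * a t)) *
                (⌈2 * α / b t - (4 * α + a t) / (a t + b t)⌉ : ℝ))) ∧
        ((∃ nn : ℕ,
            2 * α / b t - (4 * α + a t) / (a t + b t) = (nn : ℝ)) →
          da ∈ Set.Icc
              (-(2 / α) * (2 * α / b t - (4 * α + a t) / (a t + b t) + 1))
              (-(2 / α) * (2 * α / b t - (4 * α + a t) / (a t + b t) - 1)) ∧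
          db ∈ Set.Icc
              ((2 * b t / (α * a t)) *
                (2 * α / b t - (4 * α + a t) / (a t + b t) - 1))
              ((2 * b t / (α * a t)) *
                (2 * α / b t - (4 * α + a t) / (a t + b t) + 1))) := by
  rw [Measure.restrict_congr_set Ioi_ae_eq_Ici.symm, ae_restrict_iff' measurableSet_Ioi]
  filter_upwards [(hLa.mono Ioi_subset_Ici_self).ae_differentiableWithinAt_of_mem]
    with t hdiff ht
  obtain ⟨hbt, hba, habt⟩ := hprops t (mem_Ici.2 ht.le)
  have hat : 0 < a t := hbt.trans_le hba
  obtain ⟨u, hda⟩ : ∃ u, HasDerivAt a (-(2 / α) * u) t :=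
    ⟨-(α / 2) * deriv a t,
      ((hdiff ht).differentiableAt (Ioi_mem_nhds ht)).hasDerivAt.congr_deriv (by field_simp)⟩
  have hb_inv : (fun s => (a s)⁻¹) =ᶠ[𝓝 t] b := by
    filter_upwards [Ioi_mem_nhds ht] with s hs
    exact inv_eq_of_mul_eq_one_right (hprops s (mem_Ici.2 (le_of_lt hs))).2.2
  have hdb := (hda.inv hat.ne').congr_of_eventuallyEq hb_inv.symm
  obtain ⟨η, hη, hvel⟩ := exists_pos_eventually_velocity_mem_Icc hα ht hbt.ne' (by positivity) hX
    hconvA hconvB hda.continuousAt hdb.continuousAt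
  have hu := hda.mem_Icc_of_eventually_velocity_mem_Icc hα ht hrecA
    (fun s hs => hconvA.tendsto_at hs) ⟨η, hη, hvel⟩
  have hdb_eq : -(-(2 / α) * u) / a t ^ 2 = 2 * b t / (α * a t) * u := by
    rw [← inv_eq_of_mul_eq_one_right habt]
    field_simp
  rw [hdb_eq] at hdb
  obtain ⟨hnon, hnat⟩ := mem_Icc_floor_ceil_of_mem_Icc_ceil_sub_one_floor_add_one
    (neg_one_lt_flowRate hα.le hbt hba) hu
  rw [flowRate_eq hbt.ne' (by positivity)] at hnon hnat
  have hneg : -(2 / α) ≤ 0 := neg_nonpos.2 (by positivity)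
  have hκ : 0 ≤ 2 * b t / (α * a t) := by positivity
  exact ⟨_, _, hda, hdb,
    fun h => ⟨mul_mem_Icc_of_nonpos hneg (hnon h), mul_mem_Icc_of_nonneg hκ (hnon h)⟩,
    fun h => ⟨mul_mem_Icc_of_nonpos hneg (hnat h), mul_mem_Icc_of_nonneg hκ (hnat h)⟩⟩

theorem statement16 (α a₀ b₀ : ℝ) (hα : 0 < α) (hb : 0 < b₀) (hba : b₀ < a₀)
    (hab : a₀ * b₀ = 1)
    (A B : ℝ → ℕ → ℝ) (X : ℝ → ℕ → ℤ)
    (hpos : ∀ ε > (0 : ℝ), ∀ k, 0 < A ε k ∧ 0 < B ε k)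
    (hinit : ∀ ε > (0 : ℝ), A ε 0 = a₀ ∧ B ε 0 = b₀)
    (hX : ∀ ε > (0 : ℝ), ∀ k,
      X ε k = ⌊2 * α * (A ε k - B ε k) / (B ε k * (A ε k + B ε k)) -
          A ε k / (A ε k + B ε k)⌋ ∨
      X ε k = ⌈2 * α * (A ε k - B ε k) / (B ε k * (A ε k + B ε k)) -
          A ε k / (A ε k + B ε k)⌉)
    (hrecA : ∀ ε > (0 : ℝ), ∀ k, A ε (k + 1) = A ε k - 2 * ε * (X ε k : ℝ))
    (hrecB : ∀ ε > (0 : ℝ), ∀ k, B ε (k + 1) = B ε k +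
        2 * ε * (⌊2 * B ε k * (X ε k : ℝ) / (2 * A ε k - 4 * ε * (X ε k : ℝ))⌋ : ℝ))
    (a b : ℝ → ℝ) (Ka Kb : NNReal)
    (hLa : LipschitzOnWith Ka a (Set.Ici 0))
    (hLb : LipschitzOnWith Kb b (Set.Ici 0))
    (hprops : ∀ t ∈ Set.Ici (0 : ℝ), 0 < b t ∧ b t ≤ a t ∧ a t * b t = 1)
    (hconvA : TendstoLocallyUniformlyOn (fun ε t => A ε ⌊t / (α * ε)⌋₊) a
      (nhdsWithin 0 (Set.Ioi 0)) (Set.Ici 0))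
    (hconvB : TendstoLocallyUniformlyOn (fun ε t => B ε ⌊t / (α * ε)⌋₊) b
      (nhdsWithin 0 (Set.Ioi 0)) (Set.Ici 0)) :
    ∀ᵐ t ∂(volume.restrict (Set.Ici (0 : ℝ))),
      ∃ da db : ℝ, HasDerivAt a da t ∧ HasDerivAt b db t ∧
        ((¬ ∃ nn : ℕ,
            2 * α / b t - (4 * α + a t) / (a t + b t) = (nn : ℝ)) →
          da ∈ Set.Icc
              (-(2 / α) * (⌈2 * α / b t - (4 * α + a t) / (a t + b t)⌉ : ℝ))
              (-(2 / α) * (⌊2 * α / b t - (4 * α + a t) / (a t + b t)⌋ : ℝ)) ∧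
          db ∈ Set.Icc
              ((2 * b t / (α * a t)) *
                (⌊2 * α / b t - (4 * α + a t) / (a t + b t)⌋ : ℝ))
              ((2 * b t / (α * a t)) *
                (⌈2 * α / b t - (4 * α + a t) / (a t + b t)⌉ : ℝ))) ∧
        ((∃ nn : ℕ,
            2 * α / b t - (4 * α + a t) / (a t + b t) = (nn : ℝ)) →
          da ∈ Set.Icc
              (-(2 / α) * (2 * α / b t - (4 * α + a t) / (a t + b t) + 1))
              (-(2 / α) * (2 * α / b t - (4 * α + a t) / (a t + b t) - 1)) ∧
          db ∈ Set.Icc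
              ((2 * b t / (α * a t)) *
                (2 * α / b t - (4 * α + a t) / (a t + b t) - 1))
              ((2 * b t / (α * a t)) *
                (2 * α / b t - (4 * α + a t) / (a t + b t) + 1))) :=
  statement16_general α hα A B X hX hrecA a b Ka hLa hprops hconvA hconvB
end
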